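/- arXiv:1903.01749 — 4 statements merged into one kernel-verified Lean document; each statement's English description precedes it below -/
import Mathlib

section
/- Let σ be a finite signed measure on ℝ and u* > 0, x < 0. Then |(i/√(x+i)) ∫_{u*}^∞ cos(u√λ) e^{iu√(x+i)} du| ≤ C exp(−u* √|x|/2) uniformly over λ in the support region λ ≥ x/4, for x ≤ x₀ < 0 and a constant C depending only on x₀. -/
/-!
On `[u*, ∞)` the factor `cos(u√λ)` grows at most like `exp(u |Im √λ|)` and `λ ≥ x/4` gives
`|Im √λ| ≤ √|x|/2`, while `|exp(iu√(x+i))| = exp(-u Im √(x+i))` with `Im √(x+i) ≥ √|x|`.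
The integrand is therefore dominated by `exp(-u√|x|/2)`, whose tail integral is
`2 exp(-u*√|x|/2)/√|x|`; together with `|√(x+i)| ≥ √|x|` this gives the constant `2/|x₀|`.
-/

open Complex MeasureTheory Real

theorem Complex.norm_cos_le_exp_abs_im (z : ℂ) : ‖cos z‖ ≤ Real.exp |z.im| := by
  have hexp {w : ℂ} (hw : |w.im| = |z.im|) : ‖exp (w * I)‖ ≤ Real.exp |z.im| := by
    simpa [norm_exp, ← hw] using neg_le_abs w.im
  calc ‖cos z‖ = ‖exp (z * I) + exp (-z * I)‖ / 2 := by simp [cos]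
    _ ≤ (Real.exp |z.im| + Real.exp |z.im|) / 2 := by
        gcongr
        exact (norm_add_le _ _).trans (add_le_add (hexp rfl) (hexp (by simp)))
    _ = Real.exp |z.im| := by ring

theorem Complex.sqrt_neg_re_le_cpow_inv_two_im {z : ℂ} (hz : 0 ≤ z.im) :
    √(-z.re) ≤ (z ^ (2⁻¹ : ℂ)).im := by
  rw [cpow_inv_two_im_eq_sqrt hz]
  apply Real.sqrt_le_sqrt
  linarith [neg_abs_le z.re, abs_re_le_norm z]

theorem Complex.abs_ofReal_cpow_inv_two_im_le {a c : ℝ} (hc : 0 ≤ c) (ha : -c ^ 2 ≤ a) :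
    |((a : ℂ) ^ (2⁻¹ : ℂ)).im| ≤ c := by
  rw [cpow_inv_two_im_eq_sqrt (by simp), abs_of_nonneg (Real.sqrt_nonneg _),
    Real.sqrt_le_iff, norm_real, Real.norm_eq_abs, ofReal_re]
  refine ⟨hc, ?_⟩
  cases abs_cases a <;> nlinarith

theorem norm_cos_mul_mul_exp_I_mul_le (s t : ℂ) {u : ℝ} (hu : 0 ≤ u) :
    ‖cos (u * t) * exp (I * u * s)‖ ≤ Real.exp (-(s.im - |t.im|) * u) := by
  have hcos : ‖cos (u * t)‖ ≤ Real.exp (u * |t.im|) := by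
    simpa [abs_mul, abs_of_nonneg hu] using norm_cos_le_exp_abs_im (u * t)
  have hexp : ‖exp (I * u * s)‖ = Real.exp (-(u * s.im)) := by
    simp [norm_exp, mul_re, mul_im]
  calc ‖cos (u * t) * exp (I * u * s)‖
      ≤ Real.exp (u * |t.im|) * Real.exp (-(u * s.im)) := by
        rw [norm_mul, hexp]; gcongr
    _ = Real.exp (-(s.im - |t.im|) * u) := by rw [← Real.exp_add]; ring_nf

theorem norm_setIntegral_Ioi_le_of_norm_le_exp {f : ℝ → ℂ} {a b : ℝ} (hb : 0 < b)
    (hf : ∀ u ∈ Set.Ioi a, ‖f u‖ ≤ Real.exp (-b * u)) :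
    ‖∫ u in Set.Ioi a, f u‖ ≤ Real.exp (-b * a) / b := by
  calc ‖∫ u in Set.Ioi a, f u‖ ≤ ∫ u in Set.Ioi a, Real.exp (-b * u) :=
        norm_integral_le_of_norm_le (integrableOn_exp_mul_Ioi (by linarith) a)
          ((ae_restrict_iff' measurableSet_Ioi).2 (Filter.Eventually.of_forall hf))
    _ = Real.exp (-b * a) / b := by
        rw [integral_exp_mul_Ioi (by linarith), neg_div_neg_eq]

/-- Tail estimate for Vul's integral: for `x ≤ x₀ < 0` and `λ ≥ x/4`, the tail
`(i/√(x+i)) ∫_{u*}^∞ cos(u√λ) e^{iu√(x+i)} du` is bounded by `C exp(-u*√|x|/2)`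
with `C` depending only on `x₀`. -/
theorem tail_integral_estimate (x₀ : ℝ) (hx₀ : x₀ < 0) :
    ∃ C > (0 : ℝ), ∀ x ≤ x₀, ∀ lam : ℝ, x / 4 ≤ lam → ∀ ustar > (0 : ℝ),
      ‖Complex.I / (((x : ℂ) + Complex.I) ^ (1/2 : ℂ))
          * ∫ u in Set.Ioi ustar,
              Complex.cos (u * ((lam : ℂ) ^ (1/2 : ℂ)))
                * Complex.exp (Complex.I * u * (((x : ℂ) + Complex.I) ^ (1/2 : ℂ)))‖
        ≤ C * Real.exp (-ustar * Real.sqrt |x| / 2) := by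
  refine ⟨2 / -x₀, div_pos two_pos (neg_pos.2 hx₀), fun x hx lam hlam ustar hustar => ?_⟩
  have hxneg : x < 0 := hx.trans_lt hx₀
  simp only [one_div]
  set s := ((x : ℂ) + I) ^ (2⁻¹ : ℂ)
  set t := (lam : ℂ) ^ (2⁻¹ : ℂ)
  have hsqrt : 0 < √|x| := Real.sqrt_pos.2 (abs_pos.2 hxneg.ne)
  have hs_im : √|x| ≤ s.im := by
    simpa [abs_of_neg hxneg] using sqrt_neg_re_le_cpow_inv_two_im (z := x + I) (by simp)
  have ht_im : |t.im| ≤ √|x| / 2 := by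
    refine abs_ofReal_cpow_inv_two_im_le (by positivity) ?_
    rw [div_pow, sq_sqrt (abs_nonneg x), abs_of_neg hxneg]
    linarith
  have h_integral : ‖∫ u in Set.Ioi ustar, cos (u * t) * exp (I * u * s)‖
      ≤ Real.exp (-(√|x| / 2) * ustar) / (√|x| / 2) :=
    norm_setIntegral_Ioi_le_of_norm_le_exp (by positivity) fun u hu =>
      (norm_cos_mul_mul_exp_I_mul_le s t (hustar.trans hu).le).trans
        (Real.exp_le_exp.2 (by nlinarith [hu.out]))
  have hs_norm : √|x| ≤ ‖s‖ := hs_im.trans ((le_abs_self _).trans (abs_im_le_norm s))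
  calc ‖I / s * ∫ u in Set.Ioi ustar, cos (u * t) * exp (I * u * s)‖
      = ‖∫ u in Set.Ioi ustar, cos (u * t) * exp (I * u * s)‖ / ‖s‖ := by
        rw [norm_mul, norm_div, norm_I]; ring
    _ ≤ Real.exp (-(√|x| / 2) * ustar) / (√|x| / 2) / √|x| := by gcongr
    _ = 2 / |x| * Real.exp (-ustar * √|x| / 2) := by
        rw [show -(√|x| / 2) * ustar = -ustar * √|x| / 2 by ring]
        field_simp
        rw [sq_sqrt (abs_nonneg x), div_self (abs_pos.2 hxneg.ne).ne']
    _ ≤ 2 / -x₀ * Real.exp (-ustar * √|x| / 2) := by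
        gcongr
        · linarith
        · rw [abs_of_neg hxneg]; linarith
end

section
/- Let Φ₁ be holomorphic on the closed upper half-plane with |Φ₁(z)| ≤ exp(−√|z|) there. Define σ(λ) = ∫_{−∞}^λ Re Φ₁(t) dt. Then for every x ≥ 0, ∫_{−∞}^∞ cos(x√λ) dσ(λ) = 0, where cos(x√λ) = cosh(x√(−λ)) for λ < 0. -/
/-! For `0 ≤ u < 1` the function `cos (u √z) Φ₁(z)` is holomorphic in the upper half-plane and
bounded there by `exp (-(1 - u) √|z|)`, so Cauchy's theorem on the squares `[-R, R] × [0, R]` gives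
`∫ cos (u √λ) Φ₁(λ) dλ = 0`; taking real parts proves the claim for `x < 1`.

For `x ≥ 1` we may assume the integral converges (otherwise it is `0` by convention). Split it at
`λ = 0`: the half over `λ ≥ 0` extends holomorphically in `u` to the strip `|Im u| < 1`, the half
over `λ < 0`, with kernel `cosh (u √-λ)`, to the strip `|Re u| < x`, and both are continuous up to
`u = x`. Their sum vanishes for `u ∈ (0, 1)`, hence on the rectangle `|Re u| < x, |Im u| < 1` by
the identity theorem, hence at `u = x` by continuity. -/

open Complex MeasureTheory Real Set Filter Topology

theorem Complex.norm_exp_mul_I_le (w : ℂ) : ‖Complex.exp (w * I)‖ ≤ Real.exp |w.im| := by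
  rw [Complex.norm_exp, Complex.mul_I_re, Real.exp_le_exp]
  exact neg_le_abs _

theorem Complex.norm_cos_le_exp_abs_im_s15 (w : ℂ) : ‖Complex.cos w‖ ≤ Real.exp |w.im| := by
  have h₁ := Complex.norm_exp_mul_I_le w
  have h₂ := Complex.norm_exp_mul_I_le (-w)
  rw [neg_im, abs_neg] at h₂
  rw [Complex.cos, norm_div, Complex.norm_ofNat]
  linarith [norm_add_le (Complex.exp (w * I)) (Complex.exp (-w * I))]

theorem Complex.norm_sin_le_exp_abs_im (w : ℂ) : ‖Complex.sin w‖ ≤ Real.exp |w.im| := by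
  have h₁ := Complex.norm_exp_mul_I_le w
  have h₂ := Complex.norm_exp_mul_I_le (-w)
  rw [neg_im, abs_neg] at h₂
  rw [Complex.sin, norm_div, norm_mul, Complex.norm_I, mul_one, Complex.norm_ofNat]
  linarith [norm_sub_le (Complex.exp (-w * I)) (Complex.exp (w * I))]

theorem Complex.norm_sqrt (z : ℂ) : ‖Complex.sqrt z‖ = √‖z‖ := by
  simpa [Complex.sqrt, Real.sqrt_eq_rpow] using norm_cpow_inv_nat z 2

theorem Complex.continuousOn_sqrt_upperHalfPlane :
    ContinuousOn Complex.sqrt {z : ℂ | 0 ≤ z.im} := by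
  intro z hz
  by_cases! h : 0 ≤ z.re ∨ z.im ≠ 0
  · exact (Complex.continuousAt_sqrt h).continuousWithinAt
  have hz₀ : z ≠ 0 := fun h₀ => by simp [h₀] at h
  have hexp : ContinuousWithinAt (fun w => Complex.exp (Complex.log w / 2))
      {z : ℂ | 0 ≤ z.im} z :=
    Complex.continuous_exp.continuousAt.comp_continuousWithinAt
      ((Complex.continuousWithinAt_log_of_re_neg_of_im_zero h.1 h.2).div_const 2)
  refine hexp.congr_of_eventuallyEq ?_ (sqrt_eq_exp hz₀)
  filter_upwards [eventually_nhdsWithin_of_eventually_nhds (isOpen_ne.mem_nhds hz₀)] with w hw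
  exact sqrt_eq_exp hw

theorem Complex.differentiableOn_sqrt_upperHalfPlane :
    DifferentiableOn ℂ Complex.sqrt {z : ℂ | 0 < z.im} :=
  Complex.differentiableOn_sqrt.mono fun _ hz => Or.inr (ne_of_gt hz)

theorem Complex.sqrt_ofReal_of_nonneg {t : ℝ} (ht : 0 ≤ t) : Complex.sqrt t = √t := by
  simpa using Complex.sqrt_of_nonneg (Complex.zero_le_real.2 ht)

theorem Complex.sqrt_ofReal_of_neg {t : ℝ} (ht : t < 0) : Complex.sqrt t = I * √(-t) := by
  have h := Complex.sqrt_neg_of_nonneg (Complex.zero_le_real.2 (neg_nonneg.2 ht.le))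
  rwa [← ofReal_neg, neg_neg, Complex.sqrt_ofReal_of_nonneg (neg_nonneg.2 ht.le)] at h

noncomputable def cosSqrt (u t : ℝ) : ℝ :=
  if 0 ≤ t then Real.cos (u * √t) else Real.cosh (u * √(-t))

theorem cos_mul_sqrt_ofReal (u t : ℝ) : Complex.cos (u * Complex.sqrt t) = cosSqrt u t := by
  unfold cosSqrt
  split_ifs with ht
  · rw [Complex.sqrt_ofReal_of_nonneg ht, ← ofReal_mul, ← ofReal_cos]
  · rw [Complex.sqrt_ofReal_of_neg (not_le.1 ht), ← mul_assoc, mul_comm (u : ℂ) I, mul_assoc,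
      mul_comm I, Complex.cos_mul_I, ← ofReal_mul, ← ofReal_cosh]

theorem norm_cos_mul_sqrt_le {u : ℝ} (hu : 0 ≤ u) (z : ℂ) :
    ‖Complex.cos (u * Complex.sqrt z)‖ ≤ Real.exp (u * √‖z‖) := by
  refine (Complex.norm_cos_le_exp_abs_im_s15 _).trans (Real.exp_le_exp.2 ?_)
  calc |(u * Complex.sqrt z).im| ≤ ‖(u : ℂ) * Complex.sqrt z‖ := abs_im_le_norm _
    _ = u * √‖z‖ := by rw [norm_mul, Complex.norm_real, Real.norm_of_nonneg hu, Complex.norm_sqrt]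

theorem integrable_exp_neg_mul_sqrt_abs {c : ℝ} (hc : 0 < c) :
    Integrable fun t : ℝ => Real.exp (-(c * √|t|)) := by
  refine (integrable_inv_one_add_sq.const_mul (1 + 24 / c ^ 4)).mono'
    (by fun_prop) (Eventually.of_forall fun t => ?_)
  set v := c * √|t|
  have hv : 0 ≤ v := by positivity
  have ht : t ^ 2 = v ^ 4 / c ^ 4 := by
    rw [mul_pow, mul_div_cancel_left₀ _ (by positivity), show 4 = 2 * 2 by rfl, pow_mul,
      Real.sq_sqrt (abs_nonneg t), sq_abs]
  have hexp : v ^ 4 / 24 ≤ Real.exp v := by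
    simpa [Nat.factorial] using Real.pow_div_factorial_le_exp v hv 4
  have hone := Real.one_le_exp hv
  rw [Real.norm_of_nonneg (Real.exp_pos _).le, Real.exp_neg, ← one_div,
    div_le_iff₀ (Real.exp_pos _), mul_comm, ← mul_assoc, ← div_eq_mul_inv,
    le_div_iff₀ (by positivity), ht]
  field_simp
  nlinarith [mul_le_mul_of_nonneg_right hone (by positivity : (0 : ℝ) ≤ c ^ 4)]

theorem norm_intervalIntegral_le_of_upperHalfPlane {f : ℂ → ℂ}
    (hc : ContinuousOn f {z : ℂ | 0 ≤ z.im}) (hd : DifferentiableOn ℂ f {z : ℂ | 0 < z.im})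
    {R M : ℝ} (hR : 0 ≤ R) (hM : ∀ z : ℂ, 0 ≤ z.im → R ≤ ‖z‖ → ‖f z‖ ≤ M) :
    ‖∫ t in -R..R, f t‖ ≤ 4 * R * M := by
  have hrect := Complex.integral_boundary_rect_eq_zero_of_continuousOn_of_differentiableOn f
    (-R : ℝ) (R + R * I) (hc.mono fun z hz => by simpa [hR] using (mem_reProdIm.1 hz).2.1)
    (hd.mono fun z hz => by simpa [hR] using (mem_reProdIm.1 hz).2.1)
  simp only [ofReal_neg, neg_re, ofReal_re, ofReal_im, neg_im, add_re, add_im, mul_re, mul_im,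
    I_re, I_im, mul_zero, mul_one, sub_zero, add_zero, zero_add, ofReal_zero, neg_zero,
    zero_mul] at hrect
  have hedge : ∀ {a b : ℝ} (γ : ℝ → ℂ), a ≤ b → (∀ t ∈ Ioc a b, 0 ≤ (γ t).im ∧ R ≤ ‖γ t‖) →
      ‖∫ t in a..b, f (γ t)‖ ≤ M * (b - a) := fun γ hab hγ => by
    simpa [abs_of_nonneg (sub_nonneg.2 hab)] using
      intervalIntegral.norm_integral_le_of_norm_le_const fun t ht =>
        hM _ (hγ t (uIoc_of_le hab ▸ ht)).1 (hγ t (uIoc_of_le hab ▸ ht)).2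
  have htop := hedge (a := -R) (fun t => t + R * I) (by linarith) fun t _ =>
    ⟨by simpa using hR, by simpa [abs_of_nonneg hR] using abs_im_le_norm ((t : ℂ) + R * I)⟩
  have hright := hedge (fun y => R + y * I) hR fun y hy =>
    ⟨by simpa using hy.1.le, by simpa [abs_of_nonneg hR] using abs_re_le_norm ((R : ℂ) + y * I)⟩
  have hleft := hedge (fun y => -R + y * I) hR fun y hy =>
    ⟨by simpa using hy.1.le, by simpa [abs_of_nonneg hR] using abs_re_le_norm (-(R : ℂ) + y * I)⟩
  rw [show ∫ t in -R..R, f t = (∫ t in -R..R, f (t + R * I))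
      - I • (∫ y in (0 : ℝ)..R, f (R + y * I)) + I • ∫ y in (0 : ℝ)..R, f (-R + y * I) by
    linear_combination hrect]
  refine (norm_add_le _ _).trans ((add_le_add_left (norm_sub_le _ _) _).trans ?_)
  simp only [norm_smul, Complex.norm_I, one_mul]
  linarith

theorem integrable_ofReal_of_upperHalfPlane_decay {f : ℂ → ℂ}
    (hc : ContinuousOn f {z : ℂ | 0 ≤ z.im}) {c : ℝ} (hc₀ : 0 < c)
    (hb : ∀ z : ℂ, 0 ≤ z.im → ‖f z‖ ≤ Real.exp (-(c * √‖z‖))) :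
    Integrable fun t : ℝ => f t :=
  (integrable_exp_neg_mul_sqrt_abs hc₀).mono'
    (hc.comp_continuous continuous_ofReal fun t => by simp).aestronglyMeasurable
    (Eventually.of_forall fun t => by simpa using hb t (by simp))

theorem integral_eq_zero_of_upperHalfPlane_decay {f : ℂ → ℂ}
    (hc : ContinuousOn f {z : ℂ | 0 ≤ z.im}) (hd : DifferentiableOn ℂ f {z : ℂ | 0 < z.im})
    {c : ℝ} (hc₀ : 0 < c) (hb : ∀ z : ℂ, 0 ≤ z.im → ‖f z‖ ≤ Real.exp (-(c * √‖z‖))) :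
    ∫ t : ℝ, f t = 0 := by
  have hbound : ∀ R : ℝ, 0 ≤ R →
      ‖∫ t in -R..R, f t‖ ≤ 4 * (√R ^ (2 : ℝ) * Real.exp (-c * √R)) := fun R hR => by
      rw [Real.rpow_two, Real.sq_sqrt hR, ← mul_assoc, neg_mul]
      exact norm_intervalIntegral_le_of_upperHalfPlane hc hd hR fun z hz _ =>
        (hb z hz).trans (Real.exp_le_exp.2 (neg_le_neg (by gcongr)))
  have hdecay :
      Tendsto (fun R : ℝ => 4 * (√R ^ (2 : ℝ) * Real.exp (-c * √R))) atTop (𝓝 0) := by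
    simpa using ((tendsto_rpow_mul_exp_neg_mul_atTop_nhds_zero 2 c hc₀).comp
      Real.tendsto_sqrt_atTop).const_mul 4
  refine tendsto_nhds_unique
    (intervalIntegral_tendsto_integral (integrable_ofReal_of_upperHalfPlane_decay hc hc₀ hb)
      tendsto_neg_atTop_atBot tendsto_id) ?_
  exact squeeze_zero_norm' ((eventually_ge_atTop 0).mono hbound) hdecay

theorem integral_cosSqrt_mul_re_eq_zero {Φ : ℂ → ℂ}
    (hd : DifferentiableOn ℂ Φ {z : ℂ | 0 < z.im}) (hc : ContinuousOn Φ {z : ℂ | 0 ≤ z.im})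
    (hb : ∀ z : ℂ, 0 ≤ z.im → ‖Φ z‖ ≤ Real.exp (-√‖z‖)) {u : ℝ} (hu₀ : 0 ≤ u) (hu₁ : u < 1) :
    ∫ t : ℝ, cosSqrt u t * (Φ t).re = 0 := by
  set f : ℂ → ℂ := fun z => Complex.cos (u * Complex.sqrt z) * Φ z
  have hfc : ContinuousOn f {z : ℂ | 0 ≤ z.im} :=
    (Complex.continuous_cos.comp_continuousOn
      (continuousOn_const.mul Complex.continuousOn_sqrt_upperHalfPlane)).mul hc
  have hfd : DifferentiableOn ℂ f {z : ℂ | 0 < z.im} :=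
    (Complex.differentiableOn_sqrt_upperHalfPlane.const_mul _).ccos.mul hd
  have hfb : ∀ z : ℂ, 0 ≤ z.im → ‖f z‖ ≤ Real.exp (-((1 - u) * √‖z‖)) := fun z hz =>
    calc ‖f z‖ ≤ Real.exp (u * √‖z‖) * Real.exp (-√‖z‖) := by
          rw [norm_mul]; gcongr; exacts [norm_cos_mul_sqrt_le hu₀ z, hb z hz]
      _ = Real.exp (-((1 - u) * √‖z‖)) := by rw [← Real.exp_add]; ring_nf
  calc ∫ t : ℝ, cosSqrt u t * (Φ t).re = ∫ t : ℝ, (f t).re := by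
        simp only [f, cos_mul_sqrt_ofReal, re_ofReal_mul]
    _ = (∫ t : ℝ, f t).re :=
      integral_re (integrable_ofReal_of_upperHalfPlane_decay hfc (by linarith) hfb)
    _ = 0 := by rw [integral_eq_zero_of_upperHalfPlane_decay hfc hfd (by linarith) hfb, zero_re]

theorem Complex.abs_im_mul_ofReal (y : ℂ) (r : ℝ) : |(y * r).im| = |y.im| * |r| := by
  rw [mul_im, ofReal_re, ofReal_im, mul_zero, zero_add, abs_mul]

section CosineTransform

variable {α : Type*} {s : α → ℝ} {g : α → ℂ} {a : ℝ}

theorem norm_cos_mul_mul_le {y : ℂ} (hy : |y.im| ≤ a) (t : α) :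
    ‖Complex.cos (y * s t) * g t‖ ≤ Real.exp (a * |s t|) * ‖g t‖ := by
  rw [norm_mul]
  gcongr
  refine (Complex.norm_cos_le_exp_abs_im_s15 _).trans (Real.exp_le_exp.2 ?_)
  rw [Complex.abs_im_mul_ofReal]
  gcongr

variable [MeasurableSpace α] {μ : Measure α}

noncomputable def cosineTransform (μ : Measure α) (s : α → ℝ) (g : α → ℂ) (y : ℂ) : ℂ :=
  ∫ t, Complex.cos (y * s t) * g t ∂μ

theorem aestronglyMeasurable_cos_mul (hs : AEStronglyMeasurable s μ)
    (hg : AEStronglyMeasurable g μ) (y : ℂ) :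
    AEStronglyMeasurable (fun t => Complex.cos (y * s t) * g t) μ :=
  ((Complex.continuous_cos.comp (continuous_const.mul continuous_ofReal)).comp_aestronglyMeasurable
    hs).mul hg

theorem integrable_cos_mul (hs : AEStronglyMeasurable s μ)
    (hg : AEStronglyMeasurable g μ)
    (hint : Integrable (fun t => Real.exp (a * |s t|) * ‖g t‖) μ)
    {y : ℂ} (hy : |y.im| ≤ a) :
    Integrable (fun t => Complex.cos (y * s t) * g t) μ :=
  hint.mono' (aestronglyMeasurable_cos_mul hs hg y)
    (Eventually.of_forall (norm_cos_mul_mul_le hy))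

theorem continuousOn_cosineTransform (hs : AEStronglyMeasurable s μ)
    (hg : AEStronglyMeasurable g μ)
    (hint : Integrable (fun t => Real.exp (a * |s t|) * ‖g t‖) μ) :
    ContinuousOn (cosineTransform μ s g) {y : ℂ | |y.im| ≤ a} :=
  continuousOn_of_dominated (fun y _ => aestronglyMeasurable_cos_mul hs hg y)
    (fun _ hy => Eventually.of_forall (norm_cos_mul_mul_le hy)) hint
    (Eventually.of_forall fun _ => by fun_prop)

theorem differentiableOn_cosineTransform (hs : AEStronglyMeasurable s μ)
    (hg : AEStronglyMeasurable g μ)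
    (hint : Integrable (fun t => Real.exp (a * |s t|) * ‖g t‖) μ) :
    DifferentiableOn ℂ (cosineTransform μ s g) {y : ℂ | |y.im| < a} := by
  intro y₀ (hy₀ : |y₀.im| < a)
  set ε := (a - |y₀.im|) / 2 with hε_def
  have hε : 0 < ε := by linarith
  have hball : ∀ y ∈ Metric.ball y₀ ε, |y.im| ≤ a - ε := fun y hy => by
    have := (abs_im_le_norm (y - y₀)).trans (mem_ball_iff_norm.1 hy).le
    rw [sub_im] at this
    linarith [abs_sub_abs_le_abs_sub y.im y₀.im]
  have hderiv := hasDerivAt_integral_of_dominated_loc_of_deriv_le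
    (F := fun y t => Complex.cos (y * s t) * g t)
    (F' := fun y t => -Complex.sin (y * s t) * s t * g t)
    (bound := fun t => ε⁻¹ * (Real.exp (a * |s t|) * ‖g t‖))
    (Metric.ball_mem_nhds y₀ hε)
    (Eventually.of_forall (aestronglyMeasurable_cos_mul hs hg))
    (integrable_cos_mul hs hg hint (le_of_lt hy₀))
    (((Complex.continuous_sin.comp (continuous_const.mul continuous_ofReal)).neg.mul
      continuous_ofReal).comp_aestronglyMeasurable hs |>.mul hg)
    (Eventually.of_forall fun t y hy => ?_) (hint.const_mul _)
    (Eventually.of_forall fun t y _ => ?_)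
  · exact (hderiv.2.differentiableAt).differentiableWithinAt
  · have hsin : ‖Complex.sin (y * s t)‖ ≤ Real.exp ((a - ε) * |s t|) := by
      refine (Complex.norm_sin_le_exp_abs_im _).trans (Real.exp_le_exp.2 ?_)
      rw [Complex.abs_im_mul_ofReal]
      gcongr
      exact hball y hy
    -- the factor `s t` of the derivative is absorbed by the margin `ε` left in the strip
    have hlin : |s t| ≤ ε⁻¹ * Real.exp (ε * |s t|) := by
      rw [le_inv_mul_iff₀ hε]
      linarith [Real.add_one_le_exp (ε * |s t|)]
    calc ‖-Complex.sin (y * s t) * s t * g t‖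
        = ‖Complex.sin (y * s t)‖ * |s t| * ‖g t‖ := by simp
      _ ≤ Real.exp ((a - ε) * |s t|) * (ε⁻¹ * Real.exp (ε * |s t|)) * ‖g t‖ := by gcongr
      _ = ε⁻¹ * (Real.exp (a * |s t|) * ‖g t‖) := by
        rw [show a * |s t| = (a - ε) * |s t| + ε * |s t| by ring, Real.exp_add]; ring
  · simpa using ((Complex.hasDerivAt_cos _).comp y
      ((hasDerivAt_id y).mul_const (s t : ℂ))).mul_const (g t)

end CosineTransform

theorem eqOn_zero_of_ofReal_eq_zero {f : ℂ → ℂ} {U : Set ℂ} (hf : DifferentiableOn ℂ f U)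
    (hU : IsOpen U) (hU' : IsPreconnected U) {a b : ℝ} (hab : a < b)
    (hsub : ∀ t ∈ Ioo a b, (t : ℂ) ∈ U) (h₀ : ∀ t ∈ Ioo a b, f t = 0) : EqOn f 0 U := by
  obtain ⟨c, hc⟩ : (Ioo a b).Nonempty := nonempty_Ioo.2 hab
  have hfreq : ∃ᶠ t : ℝ in 𝓝[≠] c, f t = 0 := (eventually_nhdsWithin_of_eventually_nhds
    (eventually_of_mem (isOpen_Ioo.mem_nhds hc) h₀)).frequently
  have hmap : Tendsto ((↑) : ℝ → ℂ) (𝓝[≠] c) (𝓝[≠] (c : ℂ)) :=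
    continuous_ofReal.continuousWithinAt.tendsto_nhdsWithin fun t ht => by simpa using ht
  exact (hf.analyticOnNhd hU).eqOn_zero_of_preconnected_of_frequently_eq_zero hU' (hsub c hc)
    (hmap.frequently hfreq)

theorem Complex.convex_reProdIm {s t : Set ℝ} (hs : Convex ℝ s) (ht : Convex ℝ t) :
    Convex ℝ (s ×ℂ t) :=
  convexHull_eq_self.1 (by rw [convexHull_reProdIm, hs.convexHull_eq, ht.convexHull_eq])

section Continuation

variable {φ : ℝ → ℝ} {x : ℝ}

noncomputable def cosSqrtTransform (φ : ℝ → ℝ) (y : ℂ) : ℂ :=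
  cosineTransform volume (fun t => √t) ((Ici 0).indicator fun t => (φ t : ℂ)) y +
    cosineTransform volume (fun t => √(-t)) ((Iio 0).indicator fun t => (φ t : ℂ)) (I * y)

theorem ofReal_cosSqrt_mul (u t : ℝ) :
    ((cosSqrt u t * φ t : ℝ) : ℂ) =
      Complex.cos (u * √t) * (Ici 0).indicator (fun t => (φ t : ℂ)) t +
        Complex.cos (I * u * √(-t)) * (Iio 0).indicator (fun t => (φ t : ℂ)) t := by
  by_cases ht : 0 ≤ t
  · simp [cosSqrt, ht]
  · rw [show I * u * √(-t) = ((u * √(-t) : ℝ) : ℂ) * I by push_cast; ring, Complex.cos_mul_I]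
    simp [cosSqrt, ht, not_le.1 ht]

theorem aestronglyMeasurable_indicator_ofReal (hφ : AEStronglyMeasurable φ) {S : Set ℝ}
    (hS : MeasurableSet S) : AEStronglyMeasurable (S.indicator fun t => (φ t : ℂ)) volume :=
  (continuous_ofReal.comp_aestronglyMeasurable hφ).indicator hS

theorem integrable_exp_mul_norm_indicator_Ici (hφ : AEStronglyMeasurable φ)
    (hdecay : ∀ t, 0 ≤ t → |φ t| ≤ Real.exp (-√t)) {a : ℝ} (ha : a < 1) :
    Integrable fun t => Real.exp (a * |√t|) * ‖(Ici 0).indicator (fun t => (φ t : ℂ)) t‖ := by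
  refine (integrable_exp_neg_mul_sqrt_abs (sub_pos.2 ha)).mono'
    ((by fun_prop : Continuous fun t : ℝ => Real.exp (a * |√t|)).aestronglyMeasurable.mul
      (aestronglyMeasurable_indicator_ofReal hφ measurableSet_Ici).norm)
    (Eventually.of_forall fun t => ?_)
  by_cases ht : 0 ≤ t
  · rw [norm_mul, norm_norm, Real.norm_of_nonneg (Real.exp_pos _).le,
      indicator_of_mem (mem_Ici.2 ht), Complex.norm_real, Real.norm_eq_abs,
      abs_of_nonneg (Real.sqrt_nonneg t), abs_of_nonneg ht]
    calc Real.exp (a * √t) * |φ t| ≤ Real.exp (a * √t) * Real.exp (-√t) := by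
          gcongr; exact hdecay t ht
      _ = Real.exp (-((1 - a) * √t)) := by rw [← Real.exp_add]; ring_nf
  · simp [ht, Real.exp_nonneg]

theorem integrable_exp_mul_norm_indicator_Iio (hφ : AEStronglyMeasurable φ)
    (hint : Integrable fun t => cosSqrt x t * φ t) :
    Integrable fun t => Real.exp (x * |√(-t)|) * ‖(Iio 0).indicator (fun t => (φ t : ℂ)) t‖ := by
  refine (hint.norm.const_mul 2).mono'
    ((by fun_prop : Continuous fun t : ℝ => Real.exp (x * |√(-t)|)).aestronglyMeasurable.mul
      (aestronglyMeasurable_indicator_ofReal hφ measurableSet_Iio).norm)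
    (Eventually.of_forall fun t => ?_)
  by_cases ht : t < 0
  · have hcosh : Real.exp (x * √(-t)) ≤ 2 * Real.cosh (x * √(-t)) := by
      rw [Real.cosh_eq]; linarith [Real.exp_pos (-(x * √(-t)))]
    simp only [norm_mul, Real.norm_eq_abs, abs_abs, indicator_of_mem (mem_Iio.2 ht),
      Complex.norm_real, cosSqrt, if_neg (not_le.2 ht), abs_of_nonneg (Real.sqrt_nonneg _),
      abs_of_nonneg (Real.exp_pos _).le, abs_of_nonneg (Real.cosh_pos _).le]
    rw [← mul_assoc]
    gcongr
  · simp [ht]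
    positivity

theorem cosSqrtTransform_ofReal (hφ : AEStronglyMeasurable φ)
    (hdecay : ∀ t, 0 ≤ t → |φ t| ≤ Real.exp (-√t))
    (hint : Integrable fun t => cosSqrt x t * φ t)
    {u : ℝ} (hu : |u| ≤ x) : cosSqrtTransform φ u = ∫ t, cosSqrt u t * φ t := by
  rw [← integral_complex_ofReal]
  simp_rw [ofReal_cosSqrt_mul]
  refine (integral_add ?_ ?_).symm
  · exact integrable_cos_mul (by fun_prop)
      (aestronglyMeasurable_indicator_ofReal hφ measurableSet_Ici)
      (integrable_exp_mul_norm_indicator_Ici hφ hdecay zero_lt_one) (by simp)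
  · exact integrable_cos_mul (by fun_prop)
      (aestronglyMeasurable_indicator_ofReal hφ measurableSet_Iio)
      (integrable_exp_mul_norm_indicator_Iio hφ hint) (by simpa using hu)

theorem differentiableOn_cosSqrtTransform (hφ : AEStronglyMeasurable φ)
    (hdecay : ∀ t, 0 ≤ t → |φ t| ≤ Real.exp (-√t))
    (hint : Integrable fun t => cosSqrt x t * φ t) :
    DifferentiableOn ℂ (cosSqrtTransform φ) (Ioo (-x) x ×ℂ Ioo (-1) 1) := by
  have hopen : ∀ b : ℝ, IsOpen {y : ℂ | |y.im| < b} := fun b =>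
    isOpen_lt (by fun_prop) continuous_const
  intro y hy
  obtain ⟨hre, him⟩ := mem_reProdIm.1 hy
  rw [mem_Ioo, ← abs_lt] at hre him
  obtain ⟨b, hyb, hb⟩ := exists_between him
  have hP := differentiableOn_cosineTransform (by fun_prop)
    (aestronglyMeasurable_indicator_ofReal hφ measurableSet_Ici)
    (integrable_exp_mul_norm_indicator_Ici hφ hdecay hb)
  have hN := differentiableOn_cosineTransform (by fun_prop)
    (aestronglyMeasurable_indicator_ofReal hφ measurableSet_Iio)
    (integrable_exp_mul_norm_indicator_Iio hφ hint)
  refine DifferentiableAt.differentiableWithinAt (DifferentiableAt.add ?_ ?_)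
  · exact hP.differentiableAt ((hopen b).mem_nhds hyb)
  · exact (hN.differentiableAt ((hopen x).mem_nhds (by simpa using hre))).comp y
      (differentiableAt_id.const_mul I)

theorem continuousOn_cosSqrtTransform_ofReal (hφ : AEStronglyMeasurable φ)
    (hdecay : ∀ t, 0 ≤ t → |φ t| ≤ Real.exp (-√t))
    (hint : Integrable fun t => cosSqrt x t * φ t) :
    ContinuousOn (fun u : ℝ => cosSqrtTransform φ u) (Icc (-x) x) := by
  have hP := continuousOn_cosineTransform (by fun_prop)
    (aestronglyMeasurable_indicator_ofReal hφ measurableSet_Ici)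
    (integrable_exp_mul_norm_indicator_Ici hφ hdecay zero_lt_one)
  have hN := continuousOn_cosineTransform (by fun_prop)
    (aestronglyMeasurable_indicator_ofReal hφ measurableSet_Iio)
    (integrable_exp_mul_norm_indicator_Iio hφ hint)
  refine (hP.comp_continuous continuous_ofReal fun u => by simp).continuousOn.add ?_
  exact hN.comp (by fun_prop) fun u hu => by simpa [abs_le] using hu

theorem integral_cosSqrt_mul_eq_zero_of_integrable (hφ : AEStronglyMeasurable φ)
    (hdecay : ∀ t, 0 ≤ t → |φ t| ≤ Real.exp (-√t))
    (h₀ : ∀ u ∈ Ioo (0 : ℝ) 1, ∫ t, cosSqrt u t * φ t = 0) (hx : 1 ≤ x)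
    (hint : Integrable fun t => cosSqrt x t * φ t) : ∫ t, cosSqrt x t * φ t = 0 := by
  have hrect : ∀ u ∈ Ioo (-x) x, (u : ℂ) ∈ Ioo (-x) x ×ℂ Ioo (-1) 1 := fun u hu =>
    mem_reProdIm.2 ⟨by simpa using hu, by simp⟩
  have hzero : EqOn (cosSqrtTransform φ) 0 (Ioo (-x) x ×ℂ Ioo (-1) 1) :=
    eqOn_zero_of_ofReal_eq_zero (differentiableOn_cosSqrtTransform hφ hdecay hint)
      (isOpen_Ioo.reProdIm isOpen_Ioo)
      (Complex.convex_reProdIm (convex_Ioo _ _) (convex_Ioo _ _)).isPreconnected zero_lt_one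
      (fun u hu => hrect u ⟨by linarith [hu.1], by linarith [hu.2]⟩) fun u hu => by
        rw [cosSqrtTransform_ofReal hφ hdecay hint
          (abs_le.2 ⟨by linarith [hu.1], by linarith [hu.2]⟩), h₀ u hu, ofReal_zero]
  have hzero_real : EqOn (fun u : ℝ => cosSqrtTransform φ u) 0 (Icc (-x) x) :=
    EqOn.of_subset_closure (fun u hu => hzero (hrect u hu))
      (continuousOn_cosSqrtTransform_ofReal hφ hdecay hint) continuousOn_const Ioo_subset_Icc_self
      (closure_Ioo (by linarith)).ge
  have hx_zero : cosSqrtTransform φ x = 0 := hzero_real ⟨by linarith, le_rfl⟩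
  rwa [cosSqrtTransform_ofReal hφ hdecay hint (abs_of_nonneg (by linarith)).le,
    ofReal_eq_zero] at hx_zero

end Continuation

/-- Contour shift: if `Φ₁` is continuous on the closed upper half-plane, holomorphic in
its interior, with `|Φ₁(z)| ≤ exp(-√|z|)` there, and `σ(λ) = ∫_{-∞}^λ Re Φ₁(t) dt`, then
`∫ cos(x√λ) dσ(λ) = 0` for every `x ≥ 0`, where `cos(x√λ) := cosh(x√(-λ))` for `λ < 0`. -/
theorem cosine_transform_vanishes_of_halfplane_decay (Φ₁ : ℂ → ℂ)
    (hol : DifferentiableOn ℂ Φ₁ {z : ℂ | 0 < z.im})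
    (cont : ContinuousOn Φ₁ {z : ℂ | 0 ≤ z.im})
    (hbound : ∀ z : ℂ, 0 ≤ z.im →
      ‖Φ₁ z‖ ≤ Real.exp (-Real.sqrt ‖z‖)) :
    ∀ x ≥ (0 : ℝ),
      ∫ lam : ℝ,
          (if 0 ≤ lam then Real.cos (x * Real.sqrt lam)
            else Real.cosh (x * Real.sqrt (-lam))) * (Φ₁ (lam : ℂ)).re = 0 := by
  intro x hx
  have hsmall : ∀ u ∈ Ico (0 : ℝ) 1, ∫ t : ℝ, cosSqrt u t * (Φ₁ t).re = 0 :=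
    fun u hu => integral_cosSqrt_mul_re_eq_zero hol cont hbound hu.1 hu.2
  rcases lt_or_ge x 1 with hx₁ | hx₁
  · exact hsmall x ⟨hx, hx₁⟩
  by_cases hint : Integrable fun t : ℝ => cosSqrt x t * (Φ₁ t).re
  · have hφ : Continuous fun t : ℝ => (Φ₁ t).re :=
      continuous_re.comp (cont.comp_continuous continuous_ofReal fun t => by simp)
    have hdecay : ∀ t : ℝ, 0 ≤ t → |(Φ₁ t).re| ≤ Real.exp (-√t) := fun t ht =>
      (abs_re_le_norm _).trans (by simpa [abs_of_nonneg ht] using hbound t (by simp))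
    exact integral_cosSqrt_mul_eq_zero_of_integrable hφ.aestronglyMeasurable hdecay
      (fun u hu => hsmall u (Ioo_subset_Ico_self hu)) hx₁ hint
  · exact integral_undef hint
end

section
/- Let q : [s₀,∞) → ℝ be convex. Then ∫_{s₀}^∞ q(s) e^{−s/2} ds = ∞ if and only if Σ_{k ≥ 1} exp(−q*(k/2)/k) = ∞, where q*(y) = sup_{s ≥ s₀} (ys − q(s)). -/
/-!
Write `c_k = q*((k+1)/2)/(k+1)`, so that the series is `∑ exp (-c_k)`, and recall
`∫ (s/2 - c)⁺ e^{-s/2} ds = 2 e^{-c}` and `e^{-c} = ∫_{2c}^∞ e^{-t/2}/2 dt`.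

If the series converges, so does the integral: at `s > s₀` take a supporting line of `q` of
slope `y`; testing it against the slope `(k+1)/2` just below `y` in the definition of `q*` gives
`q s ≤ q s₀ + (s - s₀)/2 + ∑_k (s/2 - c_k)⁺` (the `c_k` increase), and integrating against
`e^{-s/2}` bounds the integral by a constant plus `2 ∑ e^{-c_k}`.

Conversely, Young's inequality `s/2 - q s/(k+1) ≤ c_k` at `s = t + 2` shows that fewer than
`q (t+2)` indices satisfy `2 c_k < t`; integrating this count against `e^{-t/2}/2` bounds
`∑ e^{-c_k}` by a constant plus a multiple of the integral.
-/

open MeasureTheory Real Set Filter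
open scoped ENNReal Topology

lemma ConvexOn.add_rightDeriv_mul_sub_le {S : Set ℝ} {f : ℝ → ℝ} (hf : ConvexOn ℝ S f)
    {x y : ℝ} (hx : x ∈ interior S) (hy : y ∈ S) :
    f x + derivWithin f (Ioi x) x * (y - x) ≤ f y := by
  rcases lt_trichotomy y x with hyx | rfl | hxy
  · have h := (hf.slope_le_leftDeriv_of_mem_interior hy hx hyx).trans
      (hf.leftDeriv_le_rightDeriv_of_mem_interior hx)
    rw [slope_def_field, div_le_iff₀ (sub_pos.2 hyx)] at h
    linarith
  · simp
  · have h := hf.rightDeriv_le_slope_of_mem_interior hx hy hxy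
    rw [slope_def_field, le_div_iff₀ (sub_pos.2 hxy)] at h
    linarith

lemma mul_le_tsum_of_antitone {f : ℕ → ℝ≥0∞} (hf : Antitone f) (k : ℕ) :
    ((k : ℝ≥0∞) + 1) * f k ≤ ∑' j, f j :=
  calc ((k : ℝ≥0∞) + 1) * f k = ∑ _j ∈ Finset.range (k + 1), f k := by
        rw [Finset.sum_const, Finset.card_range, nsmul_eq_mul, Nat.cast_succ]
    _ ≤ ∑ j ∈ Finset.range (k + 1), f j :=
        Finset.sum_le_sum fun j hj => hf (Nat.lt_succ_iff.1 (Finset.mem_range.1 hj))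
    _ ≤ ∑' j, f j := ENNReal.sum_le_tsum _

lemma tsum_indicator_Ioi_le {a : ℕ → ℝ} {f : ℝ → ℝ≥0∞} {t R : ℝ}
    (h : ∀ k, a k < t → (k : ℝ) + 1 < R) :
    ∑' k, (Ioi (a k)).indicator f t ≤ ENNReal.ofReal R * f t := by
  have hvanish : ∀ k ∉ Finset.range ⌊R⌋₊, (Ioi (a k)).indicator f t = 0 := by
    intro k hk
    refine indicator_of_notMem (fun hak => hk (Finset.mem_range.2 ?_)) f
    exact Nat.lt_iff_add_one_le.2 (Nat.le_floor (by exact_mod_cast (h k hak).le))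
  calc ∑' k, (Ioi (a k)).indicator f t
      = ∑ k ∈ Finset.range ⌊R⌋₊, (Ioi (a k)).indicator f t := tsum_eq_sum hvanish
    _ ≤ ∑ _k ∈ Finset.range ⌊R⌋₊, f t :=
        Finset.sum_le_sum fun k _ => indicator_le_self _ _ t
    _ = (⌊R⌋₊ : ℝ≥0∞) * f t := by rw [Finset.sum_const, Finset.card_range, nsmul_eq_mul]
    _ ≤ ENNReal.ofReal R * f t := by
        gcongr
        rcases Nat.eq_zero_or_pos ⌊R⌋₊ with h0 | hpos
        · simp [h0]
        · rw [ENNReal.natCast_le_ofReal hpos.ne']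
          exact Nat.floor_le (Nat.floor_pos.1 hpos |>.trans' zero_le_one)

lemma ENNReal.eq_top_iff_of_le_add_mul {x y a b c d : ℝ≥0∞} (ha : a ≠ ⊤) (hb : b ≠ ⊤)
    (hc : c ≠ ⊤) (hd : d ≠ ⊤) (hxy : x ≤ a + b * y) (hyx : y ≤ c + d * x) :
    x = ⊤ ↔ y = ⊤ := by
  constructor
  · intro hx
    by_contra hy
    exact ENNReal.add_ne_top.2 ⟨ha, ENNReal.mul_ne_top hb hy⟩ (top_le_iff.1 (hx ▸ hxy))
  · intro hy
    by_contra hx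
    exact ENNReal.add_ne_top.2 ⟨hc, ENNReal.mul_ne_top hd hx⟩ (top_le_iff.1 (hy ▸ hyx))

lemma summable_iff_tsum_ofReal_ne_top {f : ℕ → ℝ} (hf : ∀ n, 0 ≤ f n) :
    Summable f ↔ ∑' n, ENNReal.ofReal (f n) ≠ ⊤ :=
  ⟨Summable.tsum_ofReal_ne_top, fun h =>
    (ENNReal.summable_toReal h).congr fun n => ENNReal.toReal_ofReal (hf n)⟩

lemma lintegral_Ioi_ofReal_eq_of_hasDerivAt {f F : ℝ → ℝ} {a : ℝ}
    (hF : ∀ x ∈ Ici a, HasDerivAt F (f x) x) (hf : ∀ x ∈ Ioi a, 0 ≤ f x)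
    (hlim : Tendsto F atTop (𝓝 0)) :
    ∫⁻ x in Ioi a, ENNReal.ofReal (f x) = ENNReal.ofReal (-F a) := by
  rw [← ofReal_integral_eq_lintegral_ofReal (integrableOn_Ioi_deriv_of_nonneg' hF hf hlim)
    ((ae_restrict_mem measurableSet_Ioi).mono hf),
    integral_Ioi_of_hasDerivAt_of_nonneg' hF hf hlim, zero_sub]

lemma hasDerivAt_exp_neg_half (x : ℝ) :
    HasDerivAt (fun t => exp (-t / 2)) (-(exp (-x / 2) / 2)) x := by
  convert ((hasDerivAt_neg x).div_const 2).exp using 1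
  ring

lemma tendsto_exp_neg_half_atTop : Tendsto (fun t => exp (-t / 2)) atTop (𝓝 0) :=
  tendsto_exp_atBot.comp (tendsto_neg_atTop_atBot.atBot_div_const two_pos)

lemma lintegral_Ioi_ofReal_exp_neg_half (b : ℝ) :
    ∫⁻ t in Ioi b, ENNReal.ofReal (exp (-t / 2) / 2) = ENNReal.ofReal (exp (-b / 2)) := by
  rw [lintegral_Ioi_ofReal_eq_of_hasDerivAt (F := fun t => -exp (-t / 2))
    (fun x _ => by simpa only [neg_neg] using (hasDerivAt_exp_neg_half x).fun_neg)
    (fun x _ => by positivity)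
    (by simpa using tendsto_exp_neg_half_atTop.neg), neg_neg]

lemma lintegral_ofReal_half_sub_mul_exp (c : ℝ) :
    ∫⁻ s, ENNReal.ofReal ((s / 2 - c) * exp (-s / 2)) = ENNReal.ofReal (2 * exp (-c)) := by
  have hsupp : (fun s => ENNReal.ofReal ((s / 2 - c) * exp (-s / 2)))
      = (Ioi (2 * c)).indicator fun s => ENNReal.ofReal ((s / 2 - c) * exp (-s / 2)) := by
    ext s
    by_cases hs : s ∈ Ioi (2 * c)
    · rw [indicator_of_mem hs]
    · rw [indicator_of_notMem hs, ENNReal.ofReal_eq_zero]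
      exact mul_nonpos_of_nonpos_of_nonneg (by rw [mem_Ioi, not_lt] at hs; linarith) (exp_nonneg _)
  have hderiv : ∀ x ∈ Ici (2 * c), HasDerivAt (fun s => -((s + 2 - 2 * c) * exp (-s / 2)))
      ((x / 2 - c) * exp (-x / 2)) x := fun x _ => by
    refine (((hasDerivAt_id' x).add_const 2).sub_const (2 * c) |>.mul
      (hasDerivAt_exp_neg_half x)).neg.congr_deriv ?_
    ring
  have hlim : Tendsto (fun s => -((s + 2 - 2 * c) * exp (-s / 2))) atTop (𝓝 0) := by
    have hlin : Tendsto (fun s => s * exp (-(1 / 2) * s)) atTop (𝓝 0) := by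
      simpa using tendsto_rpow_mul_exp_neg_mul_atTop_nhds_zero 1 (1 / 2) one_half_pos
    convert ((hlin.add (tendsto_exp_neg_half_atTop.const_mul (2 - 2 * c))).neg) using 2 with s
    · rw [show -(1 / 2) * s = -s / 2 by ring]
      ring
    · simp
  rw [hsupp, lintegral_indicator measurableSet_Ioi, lintegral_Ioi_ofReal_eq_of_hasDerivAt hderiv
    (fun x hx => mul_nonneg (by linarith [mem_Ioi.1 hx]) (exp_nonneg _)) hlim]
  congr 1
  rw [show -(2 * c) / 2 = -c by ring]
  ring

noncomputable def legendreOn (S : Set ℝ) (q : ℝ → ℝ) (y : ℝ) : ℝ :=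
  sSup ((fun s => y * s - q s) '' S)

section Legendre

variable {S : Set ℝ} {q : ℝ → ℝ} {y : ℝ}

lemma le_legendreOn (hbdd : BddAbove ((fun s => y * s - q s) '' S)) {s : ℝ} (hs : s ∈ S) :
    y * s - q s ≤ legendreOn S q y :=
  le_csSup hbdd (mem_image_of_mem _ hs)

lemma legendreOn_le (hS : S.Nonempty) {b : ℝ} (h : ∀ s ∈ S, y * s - q s ≤ b) :
    legendreOn S q y ≤ b :=
  csSup_le (hS.image _) (forall_mem_image.2 h)

lemma legendreOn_div_le_div (hS : S.Nonempty) (hq : ∀ s ∈ S, 0 ≤ q s) {z : ℝ}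
    (hbdd : BddAbove ((fun s => z * s - q s) '' S)) (hy : 0 < y) (hyz : y ≤ z) :
    legendreOn S q y / y ≤ legendreOn S q z / z := by
  have hz : 0 < z := hy.trans_le hyz
  rw [div_le_iff₀ hy]
  refine legendreOn_le hS fun s hs => ?_
  have hratio : y / z ≤ 1 := (div_le_one hz).2 hyz
  calc y * s - q s ≤ y * s - y / z * q s := by nlinarith [hq s hs]
    _ = y / z * (z * s - q s) := by field_simp
    _ ≤ y / z * legendreOn S q z := by gcongr; exact le_legendreOn hbdd hs
    _ = legendreOn S q z / z * y := by ring

lemma legendreOn_Ici_le_of_supporting {s₀ s w : ℝ}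
    (hsupp : ∀ u ∈ Ici s₀, q s + w * (u - s) ≤ q u) (hyw : y ≤ w) :
    legendreOn (Ici s₀) q y ≤ w * s - q s - (w - y) * s₀ :=
  legendreOn_le nonempty_Ici fun u hu => by
    nlinarith [hsupp u hu, mul_nonneg (sub_nonneg.2 hyw) (sub_nonneg.2 (mem_Ici.1 hu))]

end Legendre

/-- `exp (-dcExponent s₀ q k) = B_{k+1}^{-1/(k+1)}` for `B_n = exp (q*(n/2))`: the index is
shifted so that the series starts at `k = 0`. -/
noncomputable def dcExponent (s₀ : ℝ) (q : ℝ → ℝ) (k : ℕ) : ℝ :=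
  legendreOn (Ici s₀) q (((k : ℝ) + 1) / 2) / ((k : ℝ) + 1)

section DenjoyCarleman

variable {s₀ : ℝ} {q : ℝ → ℝ}

lemma half_sub_div_le_dcExponent
    (hfin : ∀ k : ℕ, BddAbove ((fun s => ((k : ℝ) + 1) / 2 * s - q s) '' Ici s₀))
    (k : ℕ) {s : ℝ} (hs : s₀ ≤ s) : s / 2 - q s / ((k : ℝ) + 1) ≤ dcExponent s₀ q k := by
  have hk : (0 : ℝ) < (k : ℝ) + 1 := by positivity
  rw [dcExponent, le_div_iff₀ hk, sub_mul, div_mul_cancel₀ _ hk.ne']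
  linarith [le_legendreOn (hfin k) (mem_Ici.2 hs)]

lemma half_sub_le_dcExponent (hq0 : ∀ s ≥ s₀, 0 ≤ q s)
    (hfin : ∀ k : ℕ, BddAbove ((fun s => ((k : ℝ) + 1) / 2 * s - q s) '' Ici s₀)) (k : ℕ) :
    s₀ / 2 - q s₀ ≤ dcExponent s₀ q k := by
  have hdiv : q s₀ / ((k : ℝ) + 1) ≤ q s₀ :=
    div_le_self (hq0 s₀ le_rfl) (by linarith [k.cast_nonneg (α := ℝ)])
  linarith [half_sub_div_le_dcExponent hfin k le_rfl]

lemma dcExponent_mono (hq0 : ∀ s ≥ s₀, 0 ≤ q s)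
    (hfin : ∀ k : ℕ, BddAbove ((fun s => ((k : ℝ) + 1) / 2 * s - q s) '' Ici s₀)) :
    Monotone (dcExponent s₀ q) := by
  intro m n hmn
  have h := legendreOn_div_le_div nonempty_Ici hq0 (hfin n) (by positivity)
    (by gcongr : ((m : ℝ) + 1) / 2 ≤ ((n : ℝ) + 1) / 2)
  rw [div_div_eq_mul_div, div_div_eq_mul_div, mul_div_right_comm,
    mul_div_right_comm (legendreOn _ _ _)] at h
  rw [dcExponent, dcExponent]
  linarith

lemma le_succ_mul_half_sub_dcExponent_add {s y : ℝ} (hs : s₀ ≤ s)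
    (hsupp : ∀ u ∈ Ici s₀, q s + y * (u - s) ≤ q u) {k : ℕ} (hky : (k : ℝ) + 1 ≤ 2 * y)
    (hyk : 2 * y ≤ (k : ℝ) + 2) :
    q s ≤ ((k : ℝ) + 1) * (s / 2 - dcExponent s₀ q k) + (s - s₀) / 2 := by
  have hL := legendreOn_Ici_le_of_supporting hsupp (by linarith : ((k : ℝ) + 1) / 2 ≤ y)
  have hk : ((k : ℝ) + 1) * dcExponent s₀ q k = legendreOn (Ici s₀) q (((k : ℝ) + 1) / 2) :=
    mul_div_cancel₀ _ (by positivity)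
  nlinarith [mul_nonneg (by linarith : 0 ≤ (k : ℝ) + 2 - 2 * y) (sub_nonneg.2 hs)]

lemma ofReal_le_add_tsum_half_sub_dcExponent (hconv : ConvexOn ℝ (Ici s₀) q)
    (hq0 : ∀ s ≥ s₀, 0 ≤ q s)
    (hfin : ∀ k : ℕ, BddAbove ((fun s => ((k : ℝ) + 1) / 2 * s - q s) '' Ici s₀))
    {s : ℝ} (hs : s₀ ≤ s) :
    ENNReal.ofReal (q s) ≤ ENNReal.ofReal (s / 2 - (s₀ / 2 - q s₀))
      + ∑' k, ENNReal.ofReal (s / 2 - dcExponent s₀ q k) := by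
  rcases hs.eq_or_lt with rfl | hlt
  · exact le_add_right (ENNReal.ofReal_le_ofReal (by linarith))
  set y := derivWithin q (Ioi s) s
  have hsupp : ∀ u ∈ Ici s₀, q s + y * (u - s) ≤ q u := fun u hu =>
    hconv.add_rightDeriv_mul_sub_le (by rwa [interior_Ici]) hu
  by_cases hy : y ≤ 1 / 2
  · refine le_add_right (ENNReal.ofReal_le_ofReal ?_)
    nlinarith [hsupp s₀ self_mem_Ici, mul_le_mul_of_nonneg_right hy (sub_nonneg.2 hs)]
  set k := ⌊2 * y - 1⌋₊
  have hky : (k : ℝ) + 1 ≤ 2 * y := by linarith [Nat.floor_le (by linarith : 0 ≤ 2 * y - 1)]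
  have hyk : 2 * y ≤ (k : ℝ) + 2 := by linarith [Nat.lt_floor_add_one (2 * y - 1)]
  have hanti : Antitone fun j => ENNReal.ofReal (s / 2 - dcExponent s₀ q j) := fun i j hij =>
    ENNReal.ofReal_le_ofReal (by linarith [dcExponent_mono hq0 hfin hij])
  calc ENNReal.ofReal (q s)
      ≤ ENNReal.ofReal ((s - s₀) / 2 + ((k : ℝ) + 1) * (s / 2 - dcExponent s₀ q k)) :=
        ENNReal.ofReal_le_ofReal
          (by linarith [le_succ_mul_half_sub_dcExponent_add hs hsupp hky hyk])
    _ ≤ ENNReal.ofReal ((s - s₀) / 2)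
          + ((k : ℝ≥0∞) + 1) * ENNReal.ofReal (s / 2 - dcExponent s₀ q k) := by
        refine ENNReal.ofReal_add_le.trans_eq ?_
        rw [ENNReal.ofReal_mul (by positivity), ENNReal.ofReal_add (by positivity) zero_le_one,
          ENNReal.ofReal_natCast, ENNReal.ofReal_one]
    _ ≤ _ := add_le_add (ENNReal.ofReal_le_ofReal (by linarith [hq0 s₀ le_rfl]))
          (mul_le_tsum_of_antitone hanti k)

lemma lintegral_ofReal_mul_exp_le (hconv : ConvexOn ℝ (Ici s₀) q)
    (hq0 : ∀ s ≥ s₀, 0 ≤ q s)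
    (hfin : ∀ k : ℕ, BddAbove ((fun s => ((k : ℝ) + 1) / 2 * s - q s) '' Ici s₀)) :
    ∫⁻ s in Ici s₀, ENNReal.ofReal (q s * exp (-s / 2))
      ≤ ENNReal.ofReal (2 * exp (-(s₀ / 2 - q s₀)))
        + 2 * ∑' k, ENNReal.ofReal (exp (-dcExponent s₀ q k)) := by
  have hmeas : ∀ c : ℝ, Measurable fun s => ENNReal.ofReal ((s / 2 - c) * exp (-s / 2)) :=
    fun c => by fun_prop
  have hpoint : ∀ s ∈ Ici s₀, ENNReal.ofReal (q s * exp (-s / 2))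
      ≤ ENNReal.ofReal ((s / 2 - (s₀ / 2 - q s₀)) * exp (-s / 2))
        + ∑' k, ENNReal.ofReal ((s / 2 - dcExponent s₀ q k) * exp (-s / 2)) := fun s hs => by
    simp only [ENNReal.ofReal_mul' (exp_nonneg _), ENNReal.tsum_mul_right, ← add_mul]
    gcongr
    exact ofReal_le_add_tsum_half_sub_dcExponent hconv hq0 hfin hs
  calc ∫⁻ s in Ici s₀, ENNReal.ofReal (q s * exp (-s / 2))
      ≤ ∫⁻ s in Ici s₀, (ENNReal.ofReal ((s / 2 - (s₀ / 2 - q s₀)) * exp (-s / 2))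
          + ∑' k, ENNReal.ofReal ((s / 2 - dcExponent s₀ q k) * exp (-s / 2))) :=
        setLIntegral_mono' measurableSet_Ici hpoint
    _ ≤ ∫⁻ s, (ENNReal.ofReal ((s / 2 - (s₀ / 2 - q s₀)) * exp (-s / 2))
          + ∑' k, ENNReal.ofReal ((s / 2 - dcExponent s₀ q k) * exp (-s / 2))) :=
        setLIntegral_le_lintegral _ _
    _ = ENNReal.ofReal (2 * exp (-(s₀ / 2 - q s₀)))
          + 2 * ∑' k, ENNReal.ofReal (exp (-dcExponent s₀ q k)) := by
        rw [lintegral_add_left (hmeas _), lintegral_tsum fun k => (hmeas _).aemeasurable,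
          ← ENNReal.tsum_mul_left]
        simp only [lintegral_ofReal_half_sub_mul_exp, ENNReal.ofReal_mul zero_le_two,
          ENNReal.ofReal_ofNat]

/-- Young's inequality at `s = max s₀ (t + 2)` gives `k + 1 < q s` whenever
`2 * dcExponent s₀ q k < t`, and no such `k` exists when `t ≤ s₀ - 2 q s₀`. -/
lemma tsum_indicator_Ioi_two_mul_dcExponent_le (hq0 : ∀ s ≥ s₀, 0 ≤ q s)
    (hfin : ∀ k : ℕ, BddAbove ((fun s => ((k : ℝ) + 1) / 2 * s - q s) '' Ici s₀))
    (f : ℝ → ℝ≥0∞) (t : ℝ) :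
    ∑' k, (Ioi (2 * dcExponent s₀ q k)).indicator f t
      ≤ (Ioi (s₀ - 2 * q s₀)).indicator (fun t => ENNReal.ofReal (q s₀) * f t) t
        + (Ici (s₀ - 2)).indicator (fun t => ENNReal.ofReal (q (t + 2)) * f t) t := by
  have hcount : ∀ s, s₀ ≤ s → t + 2 ≤ s → ∀ k, 2 * dcExponent s₀ q k < t → (k : ℝ) + 1 < q s :=
    fun s hs hts k hk => by
      have h := half_sub_div_le_dcExponent hfin k hs
      rw [← one_lt_div (by positivity)]
      linarith
  by_cases hlow : t ∈ Ioi (s₀ - 2 * q s₀)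
  · rw [indicator_of_mem hlow]
    by_cases hmid : t ∈ Ici (s₀ - 2)
    · rw [indicator_of_mem hmid]
      exact (tsum_indicator_Ioi_le (hcount _ (by linarith [mem_Ici.1 hmid]) le_rfl)).trans
        le_add_self
    · rw [mem_Ici, not_le] at hmid
      exact (tsum_indicator_Ioi_le (hcount _ le_rfl (by linarith))).trans le_self_add
  · have hnone : ∀ k, 2 * dcExponent s₀ q k < t → (k : ℝ) + 1 < 0 := fun k hk =>
      absurd (mem_Ioi.2 (by linarith [half_sub_le_dcExponent hq0 hfin k])) hlow
    exact (tsum_indicator_Ioi_le hnone).trans (by simp)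

lemma tsum_ofReal_exp_neg_dcExponent_le (hq0 : ∀ s ≥ s₀, 0 ≤ q s)
    (hfin : ∀ k : ℕ, BddAbove ((fun s => ((k : ℝ) + 1) / 2 * s - q s) '' Ici s₀)) :
    ∑' k, ENNReal.ofReal (exp (-dcExponent s₀ q k))
      ≤ ENNReal.ofReal (q s₀) * ENNReal.ofReal (exp (-(s₀ - 2 * q s₀) / 2))
        + ENNReal.ofReal (exp 1 / 2) * ∫⁻ s in Ici s₀, ENNReal.ofReal (q s * exp (-s / 2)) := by
  set g : ℝ → ℝ≥0∞ := fun t => ENNReal.ofReal (exp (-t / 2) / 2)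
  have hg : Measurable g := by fun_prop
  set G : ℝ → ℝ≥0∞ := (Ici s₀).indicator fun s => ENNReal.ofReal (q s * exp (-s / 2))
  have hshift : ∀ t, (Ici (s₀ - 2)).indicator (fun t => ENNReal.ofReal (q (t + 2)) * g t) t
      = ENNReal.ofReal (exp 1 / 2) * G (t + 2) := fun t => by
    dsimp only [G, g]
    by_cases ht : s₀ ≤ t + 2
    · rw [indicator_of_mem (mem_Ici.2 (by linarith)), indicator_of_mem (mem_Ici.2 ht),
        ← ENNReal.ofReal_mul (hq0 _ ht), ← ENNReal.ofReal_mul (by positivity),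
        show -t / 2 = 1 + -(t + 2) / 2 by ring, exp_add]
      ring_nf
    · rw [indicator_of_notMem (by rw [mem_Ici]; linarith),
        indicator_of_notMem (by rwa [mem_Ici]), mul_zero]
  calc ∑' k, ENNReal.ofReal (exp (-dcExponent s₀ q k))
      = ∑' k, ∫⁻ t, (Ioi (2 * dcExponent s₀ q k)).indicator g t := by
        refine tsum_congr fun k => ?_
        rw [lintegral_indicator measurableSet_Ioi, lintegral_Ioi_ofReal_exp_neg_half]
        ring_nf
    _ = ∫⁻ t, ∑' k, (Ioi (2 * dcExponent s₀ q k)).indicator g t :=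
        (lintegral_tsum fun k => (hg.indicator measurableSet_Ioi).aemeasurable).symm
    _ ≤ ∫⁻ t, ((Ioi (s₀ - 2 * q s₀)).indicator (fun t => ENNReal.ofReal (q s₀) * g t) t
          + ENNReal.ofReal (exp 1 / 2) * G (t + 2)) :=
        lintegral_mono fun t => (tsum_indicator_Ioi_two_mul_dcExponent_le hq0 hfin g t).trans_eq
          (by rw [hshift])
    _ = _ := by
        rw [lintegral_add_left ((hg.const_mul _).indicator measurableSet_Ioi),
          lintegral_indicator measurableSet_Ioi, lintegral_const_mul _ hg,
          lintegral_Ioi_ofReal_exp_neg_half, lintegral_const_mul' _ _ ENNReal.ofReal_ne_top,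
          lintegral_add_right_eq_self G 2, lintegral_indicator measurableSet_Ici]

end DenjoyCarleman

/-- Ostrowski-type equivalence: for a convex nonnegative `q` on `[s₀,∞)` with finite
Legendre transform at the points `k/2`, the logarithmic integral
`∫_{s₀}^∞ q(s) e^{-s/2} ds` is infinite if and only if `Σ_{k≥1} exp(-q*(k/2)/k) = ∞`. -/
theorem ostrowski_equivalence (s₀ : ℝ) (q : ℝ → ℝ)
    (hconv : ConvexOn ℝ (Set.Ici s₀) q)
    (hq0 : ∀ s ≥ s₀, 0 ≤ q s)
    (hfin : ∀ k : ℕ,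
      BddAbove ((fun s => ((k : ℝ) + 1) / 2 * s - q s) '' Set.Ici s₀)) :
    (∫⁻ s in Set.Ici s₀, ENNReal.ofReal (q s * Real.exp (-s / 2)) = ⊤)
      ↔ ¬ Summable (fun k : ℕ =>
          Real.exp (-(sSup ((fun s => ((k : ℝ) + 1) / 2 * s - q s) '' Set.Ici s₀))
            / ((k : ℝ) + 1))) := by
  have hterm : (fun k : ℕ => exp (-(sSup ((fun s => ((k : ℝ) + 1) / 2 * s - q s) '' Ici s₀))
      / ((k : ℝ) + 1))) = fun k => exp (-dcExponent s₀ q k) :=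
    funext fun k => by rw [neg_div]; rfl
  rw [hterm, summable_iff_tsum_ofReal_ne_top fun k => (exp_pos _).le, not_not]
  exact ENNReal.eq_top_iff_of_le_add_mul ENNReal.ofReal_ne_top ENNReal.ofNat_ne_top
    (ENNReal.mul_ne_top ENNReal.ofReal_ne_top ENNReal.ofReal_ne_top) ENNReal.ofReal_ne_top
    (lintegral_ofReal_mul_exp_le hconv hq0 hfin) (tsum_ofReal_exp_neg_dcExponent_le hq0 hfin)
end

section
/- Let M_k(x) be a sequence of positive reals for each x ≥ 0 with Σ_k M_k(x)^{−1/k} = ∞, and suppose φ : ℝ → ℝ is C^∞ with sup_{|y| ≤ x} |φ^{(k)}(y)| ≤ C·M_k(x) for all k and x, and φ^{(k)}(0) = 0 for all k ≥ 0. Then φ ≡ 0. -/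
open Real Finset

-- (n+1)^n ≤ e^n * n!
lemma succ_pow_le_exp_mul_factorial (n : ℕ) :
    ((n + 1 : ℝ)) ^ n ≤ Real.exp 1 ^ n * n.factorial := by
  induction n with
  | zero => simp
  | succ n ih =>
    have h1 : (1 + 1 / ((n:ℝ) + 1)) ≤ Real.exp (1 / ((n:ℝ)+1)) := by
      have := Real.add_one_le_exp (1 / ((n:ℝ)+1)); linarith
    have hpos : (0:ℝ) < (n:ℝ) + 1 := by positivity
    have h2 : ((n:ℝ) + 2) ^ (n+1) ≤ Real.exp 1 * ((n:ℝ)+1) ^ (n+1) := by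
      have : ((n:ℝ) + 2) = ((n:ℝ)+1) * (1 + 1/((n:ℝ)+1)) := by field_simp; ring
      rw [this, mul_pow]
      have h3 : (1 + 1 / ((n:ℝ) + 1)) ^ (n+1) ≤ Real.exp (1/((n:ℝ)+1)) ^ (n+1) := by
        apply pow_le_pow_left₀ (by positivity) h1
      have h4 : Real.exp (1/((n:ℝ)+1)) ^ (n+1) = Real.exp 1 := by
        rw [← Real.exp_nat_mul]
        congr 1
        field_simp
        push_cast; ring
      nlinarith [pow_nonneg (le_of_lt hpos) (n+1), h3, h4,
        pow_pos hpos (n+1)]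
    calc ((n+1:ℕ) + 1 : ℝ) ^ (n+1) = ((n:ℝ)+2)^(n+1) := by push_cast; ring_nf
      _ ≤ Real.exp 1 * ((n:ℝ)+1)^(n+1) := h2
      _ = Real.exp 1 * (((n:ℝ)+1)^n * ((n:ℝ)+1)) := by ring
      _ ≤ Real.exp 1 * ((Real.exp 1 ^ n * n.factorial) * ((n:ℝ)+1)) := by
          apply mul_le_mul_of_nonneg_left _ (Real.exp_pos 1).le
          exact mul_le_mul_of_nonneg_right ih (by positivity)
      _ = Real.exp 1 ^ (n+1) * (n+1).factorial := by
          rw [Nat.factorial_succ]; push_cast; ring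

-- AM-GM: geometric mean of n positive reals ≤ arithmetic mean
lemma geom_mean_le_arith (n : ℕ) (hn : 0 < n) (c : ℕ → ℝ) (hc : ∀ i, 0 ≤ c i) :
    (∏ i ∈ range n, c i) ^ ((1:ℝ)/n) ≤ (∑ i ∈ range n, c i) / n := by
  have hw : ∀ i ∈ range n, (0:ℝ) ≤ 1/n := fun i _ => by positivity
  have hw' : ∑ _i ∈ range n, (1:ℝ)/n = 1 := by
    rw [Finset.sum_const, card_range, nsmul_eq_mul]
    field_simp
  have key := Real.geom_mean_le_arith_mean_weighted (range n) (fun _ => (1:ℝ)/n) c hw hw'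
    (fun i _ => hc i)
  have heq : (∏ i ∈ range n, c i) ^ ((1:ℝ)/n) = ∏ i ∈ range n, c i ^ ((1:ℝ)/n) := by
    exact (Real.finset_prod_rpow (range n) c (fun i _ => hc i) _).symm
  rw [heq]
  calc ∏ i ∈ range n, c i ^ ((1:ℝ)/n) ≤ ∑ i ∈ range n, (1/n) * c i := key
    _ = (∑ i ∈ range n, c i) / n := by rw [← Finset.mul_sum]; ring

lemma tele_sum (n : ℕ) : ∀ i : ℕ, i ≤ n →
    (∑ k ∈ Finset.Ico i n, (1:ℝ)/((k+1)*(k+2))) = 1/(i+1) - 1/(n+1) := by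
  induction n with
  | zero => intro i hi; interval_cases i; simp
  | succ n ih =>
    intro i hi
    rcases Nat.lt_or_ge i (n+1) with h | h
    · have h' : i ≤ n := Nat.lt_succ_iff.mp h
      rw [Finset.sum_Ico_succ_top h', ih i h']
      have h1 : ((n:ℝ)+1) ≠ 0 := by positivity
      have h2 : ((n:ℝ)+2) ≠ 0 := by positivity
      push_cast
      field_simp
      ring
    · have : i = n+1 := le_antisymm hi h
      subst this
      simp

lemma tele_sum_le (i n : ℕ) :
    (∑ k ∈ Finset.Ico i n, (1:ℝ)/((k+1)*(k+2))) ≤ 1/(i+1) := by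
  rcases Nat.lt_or_ge i n with h | h
  · rw [tele_sum n i h.le]
    have : (0:ℝ) < (n:ℝ)+1 := by positivity
    have : (0:ℝ) ≤ 1/((n:ℝ)+1) := by positivity
    linarith
  · rw [Finset.Ico_eq_empty (by omega)]
    simp
    positivity

/-- Carleman-type summability: if `a` is positive and summable, then the sequence of
geometric means is summable. -/
lemma carleman_summable (a : ℕ → ℝ) (ha : ∀ i, 0 < a i) (hs : Summable a) :
    Summable (fun k : ℕ => (∏ i ∈ range (k+1), a i) ^ ((1:ℝ)/(k+1))) := by
  set b : ℕ → ℝ := fun k => (∏ i ∈ range (k+1), a i) ^ ((1:ℝ)/(k+1)) with hb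
  have hbnn : ∀ k, 0 ≤ b k := fun k => Real.rpow_nonneg
    (Finset.prod_nonneg (fun i _ => (ha i).le)) _
  -- key pointwise bound
  have key : ∀ k : ℕ, b k ≤ Real.exp 1 / (((k:ℝ)+1)*((k:ℝ)+2)) *
      (∑ i ∈ range (k+1), ((i:ℝ)+1) * a i) := by
    intro k
    have hfac : (0:ℝ) < ((k+1).factorial : ℝ) := by exact_mod_cast Nat.factorial_pos (k+1)
    have hprod : ∏ i ∈ range (k+1), a i =
        (∏ i ∈ range (k+1), ((i:ℝ)+1) * a i) / ((k+1).factorial : ℝ) := by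
      rw [Finset.prod_mul_distrib]
      have h5 : ∏ i ∈ range (k+1), ((i:ℝ)+1) = ((k+1).factorial : ℝ) := by
        rw [← Finset.prod_range_add_one_eq_factorial (k+1)]
        push_cast
        rfl
      rw [h5]
      field_simp
    have hP : (0:ℝ) ≤ ∏ i ∈ range (k+1), ((i:ℝ)+1) * a i :=
      Finset.prod_nonneg (fun i _ => mul_nonneg (by positivity) (ha i).le)
    have hbk : b k = (∏ i ∈ range (k+1), ((i:ℝ)+1) * a i) ^ ((1:ℝ)/(k+1)) /
        (((k+1).factorial : ℝ)) ^ ((1:ℝ)/(k+1)) := by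
      rw [hb]
      simp only
      rw [hprod, Real.div_rpow hP hfac.le]
    -- geometric mean bound
    have hgm := geom_mean_le_arith (k+1) (Nat.succ_pos k) (fun i => ((i:ℝ)+1) * a i)
      (fun i => mul_nonneg (by positivity) (ha i).le)
    -- factorial root lower bound
    have hfr : ((k:ℝ)+2) / Real.exp 1 ≤ (((k+1).factorial : ℝ)) ^ ((1:ℝ)/(k+1)) := by
      have h1 := succ_pow_le_exp_mul_factorial (k+1)
      -- ((k+2))^(k+1) ≤ e^(k+1) * (k+1)!
      have h2 : (((k:ℝ)+2) / Real.exp 1) ^ (k+1) ≤ ((k+1).factorial : ℝ) := by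
        rw [div_pow]
        rw [div_le_iff₀ (by positivity)]
        calc ((k:ℝ)+2)^(k+1) = ((k+1:ℕ) + 1 : ℝ)^(k+1) := by push_cast; ring_nf
          _ ≤ Real.exp 1 ^ (k+1) * ((k+1).factorial : ℝ) := h1
          _ = ((k+1).factorial : ℝ) * Real.exp 1 ^ (k+1) := by ring
      have h3 : (((((k:ℝ)+2) / Real.exp 1) ^ (k+1) : ℝ)) ^ ((1:ℝ)/(k+1)) ≤
          (((k+1).factorial : ℝ)) ^ ((1:ℝ)/(k+1)) :=
        Real.rpow_le_rpow (by positivity) h2 (by positivity)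
      rwa [← Real.rpow_natCast ((((k:ℝ)+2) / Real.exp 1)) (k+1), ← Real.rpow_mul (by positivity),
        mul_one_div, Nat.cast_add, Nat.cast_one, div_self (by positivity), Real.rpow_one] at h3
    have hfrpos : (0:ℝ) < (((k+1).factorial : ℝ)) ^ ((1:ℝ)/(k+1)) := by
      apply Real.rpow_pos_of_pos hfac
    rw [hbk]
    rw [div_le_iff₀ hfrpos]
    have hS : (0:ℝ) ≤ ∑ i ∈ range (k+1), ((i:ℝ)+1) * a i :=
      Finset.sum_nonneg (fun i _ => mul_nonneg (by positivity) (ha i).le)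
    calc (∏ i ∈ range (k+1), ((i:ℝ)+1) * a i) ^ ((1:ℝ)/(k+1))
        ≤ (∑ i ∈ range (k+1), ((i:ℝ)+1) * a i) / ((k:ℝ)+1) := by
          have := hgm
          push_cast at this ⊢
          convert this using 3 <;> push_cast <;> ring
      _ = (Real.exp 1 / (((k:ℝ)+1)*((k:ℝ)+2)) * (∑ i ∈ range (k+1), ((i:ℝ)+1) * a i)) *
          (((k:ℝ)+2) / Real.exp 1) := by
          rw [div_eq_iff (by positivity : ((k:ℝ)+1) ≠ 0)]
          field_simp
      _ ≤ (Real.exp 1 / (((k:ℝ)+1)*((k:ℝ)+2)) * (∑ i ∈ range (k+1), ((i:ℝ)+1) * a i)) *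
          ((((k+1).factorial : ℝ)) ^ ((1:ℝ)/(k+1))) := by
          apply mul_le_mul_of_nonneg_left hfr
          have h6 : (0:ℝ) ≤ ∑ i ∈ range (k+1), ((i:ℝ)+1) * a i := hS
          positivity
  -- partial sums bounded
  apply summable_of_sum_range_le (c := Real.exp 1 * (∑' i, a i)) hbnn
  intro n
  calc ∑ k ∈ range n, b k
      ≤ ∑ k ∈ range n, Real.exp 1 / (((k:ℝ)+1)*((k:ℝ)+2)) *
        (∑ i ∈ range (k+1), ((i:ℝ)+1) * a i) := Finset.sum_le_sum (fun k _ => key k)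
    _ = ∑ k ∈ Finset.Ico 0 n, ∑ i ∈ Finset.Ico 0 (k+1),
        Real.exp 1 / (((k:ℝ)+1)*((k:ℝ)+2)) * (((i:ℝ)+1) * a i) := by
        rw [← Finset.range_eq_Ico]
        apply Finset.sum_congr rfl
        intro k _
        rw [Finset.mul_sum]
        rw [Finset.range_eq_Ico]
    _ = ∑ i ∈ Finset.Ico 0 n, ∑ k ∈ Finset.Ico i n,
        Real.exp 1 / (((k:ℝ)+1)*((k:ℝ)+2)) * (((i:ℝ)+1) * a i) := by
        rw [Finset.sum_Ico_Ico_comm]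
    _ ≤ ∑ i ∈ Finset.Ico 0 n, Real.exp 1 * a i := by
        apply Finset.sum_le_sum
        intro i _
        have : ∑ k ∈ Finset.Ico i n, Real.exp 1 / (((k:ℝ)+1)*((k:ℝ)+2)) * (((i:ℝ)+1) * a i)
            = (Real.exp 1 * (((i:ℝ)+1) * a i)) * ∑ k ∈ Finset.Ico i n, (1:ℝ)/((k+1)*(k+2)) := by
          rw [Finset.mul_sum]
          apply Finset.sum_congr rfl
          intro k _
          rw [div_mul_eq_mul_div, eq_comm, mul_one_div]
        rw [this]
        calc (Real.exp 1 * (((i:ℝ)+1) * a i)) * ∑ k ∈ Finset.Ico i n, (1:ℝ)/((k+1)*(k+2))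
            ≤ (Real.exp 1 * (((i:ℝ)+1) * a i)) * (1/((i:ℝ)+1)) := by
              apply mul_le_mul_of_nonneg_left (tele_sum_le i n)
              have := (ha i).le
              positivity
          _ = Real.exp 1 * a i := by field_simp
    _ = Real.exp 1 * ∑ i ∈ Finset.Ico 0 n, a i := by rw [Finset.mul_sum]
    _ ≤ Real.exp 1 * (∑' i, a i) := by
        apply mul_le_mul_of_nonneg_left _ (Real.exp_pos 1).le
        rw [← Finset.range_eq_Ico]
        exact Summable.sum_le_tsum _ (fun i _ => (ha i).le) hs

lemma ratio_not_summable (M : ℕ → ℝ) (hpos : ∀ k, 0 < M k)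
    (hdiv : ¬ Summable (fun k : ℕ => (M (k+1)) ^ (-(1:ℝ)/((k:ℝ)+1)))) :
    ¬ Summable (fun k : ℕ => M k / M (k+1)) := by
  intro hs
  apply hdiv
  have hsum := carleman_summable (fun k => M k / M (k+1))
    (fun i => div_pos (hpos i) (hpos (i+1))) hs
  have htel : ∀ n : ℕ, ∏ i ∈ Finset.range n, M i / M (i+1) = M 0 / M n := by
    intro n
    induction n with
    | zero => simp [div_self (hpos 0).ne']
    | succ n ih =>
      rw [Finset.prod_range_succ, ih]
      field_simp [(hpos n).ne', (hpos (n+1)).ne']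
  have hsum2 : Summable (fun k : ℕ => (M 0 / M (k+1)) ^ ((1:ℝ)/((k:ℝ)+1))) := by
    refine hsum.congr fun k => ?_
    rw [htel (k+1)]
  have hM0 : (0:ℝ) < M 0 := hpos 0
  set K : ℝ := max 1 (M 0)⁻¹ with hK
  have hle : ∀ k : ℕ, (M (k+1)) ^ (-(1:ℝ)/((k:ℝ)+1)) ≤
      K * (M 0 / M (k+1)) ^ ((1:ℝ)/((k:ℝ)+1)) := by
    intro k
    have hek : (0:ℝ) < (k:ℝ)+1 := by positivity
    have hbk : (M 0 / M (k+1)) ^ ((1:ℝ)/((k:ℝ)+1)) =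
        (M 0) ^ ((1:ℝ)/((k:ℝ)+1)) * (M (k+1)) ^ (-(1:ℝ)/((k:ℝ)+1)) := by
      rw [Real.div_rpow hM0.le (hpos (k+1)).le, div_eq_mul_inv,
        ← Real.rpow_neg (hpos (k+1)).le, neg_div]
    have hKb : (M 0) ^ (-(1:ℝ)/((k:ℝ)+1)) ≤ K := by
      rcases le_total 1 (M 0) with h | h
      · calc (M 0) ^ (-(1:ℝ)/((k:ℝ)+1)) ≤ 1 := by
              apply Real.rpow_le_one_of_one_le_of_nonpos h
              rw [neg_div]
              have : (0:ℝ) ≤ 1/((k:ℝ)+1) := by positivity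
              linarith
          _ ≤ K := le_max_left _ _
      · calc (M 0) ^ (-(1:ℝ)/((k:ℝ)+1)) ≤ (M 0) ^ (-1:ℝ) := by
              apply Real.rpow_le_rpow_of_exponent_ge hM0 h
              rw [neg_div]
              have h1 : (1:ℝ)/((k:ℝ)+1) ≤ 1 := by
                rw [div_le_one hek]
                have : (0:ℝ) ≤ (k:ℝ) := Nat.cast_nonneg k
                linarith
              linarith
          _ = (M 0)⁻¹ := Real.rpow_neg_one _
          _ ≤ K := le_max_right _ _
    have hb0 : (0:ℝ) ≤ (M (k+1)) ^ (-(1:ℝ)/((k:ℝ)+1)) := Real.rpow_nonneg (hpos (k+1)).le _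
    have h2 : (1:ℝ) ≤ K * (M 0) ^ ((1:ℝ)/((k:ℝ)+1)) := by
      have h3 : (M 0) ^ (-(1:ℝ)/((k:ℝ)+1)) * (M 0) ^ ((1:ℝ)/((k:ℝ)+1)) = 1 := by
        have he : (-(1:ℝ)/((k:ℝ)+1) + (1:ℝ)/((k:ℝ)+1)) = 0 := by ring
        rw [← Real.rpow_add hM0, he, Real.rpow_zero]
      calc (1:ℝ) = (M 0) ^ (-(1:ℝ)/((k:ℝ)+1)) * (M 0) ^ ((1:ℝ)/((k:ℝ)+1)) := h3.symm
        _ ≤ K * (M 0) ^ ((1:ℝ)/((k:ℝ)+1)) :=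
            mul_le_mul_of_nonneg_right hKb (Real.rpow_nonneg hM0.le _)
    calc (M (k+1)) ^ (-(1:ℝ)/((k:ℝ)+1))
        = 1 * (M (k+1)) ^ (-(1:ℝ)/((k:ℝ)+1)) := (one_mul _).symm
      _ ≤ (K * (M 0) ^ ((1:ℝ)/((k:ℝ)+1))) * (M (k+1)) ^ (-(1:ℝ)/((k:ℝ)+1)) :=
          mul_le_mul_of_nonneg_right h2 hb0
      _ = K * (M 0 / M (k+1)) ^ ((1:ℝ)/((k:ℝ)+1)) := by rw [hbk]; ring
  apply Summable.of_nonneg_of_le (fun k => Real.rpow_nonneg (hpos (k+1)).le _) hle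
  exact hsum2.mul_left K


lemma denjoy_step
    (ψ : ℝ → ℝ) (hψ : ContDiff ℝ (⊤ : ℕ∞) ψ)
    (Mk : ℕ → ℝ) (hMpos : ∀ k, 0 < Mk k)
    (xb : ℝ) (hxb : 0 < xb)
    (C : ℝ) (hC : 0 < C)
    (hb : ∀ k : ℕ, ∀ y ∈ Set.Icc 0 xb, |iteratedDeriv k ψ y| ≤ C * Mk k)
    (ha : ∀ i l : ℕ, i ≤ l → Mk l / Mk (l+1) ≤ Mk i / Mk (i+1))
    (j : ℕ) (x : ℝ) (hx : x ∈ Set.Icc 0 xb)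
    (hQ : ∀ k ≤ j + 1, ∀ s ∈ Set.Icc 0 x,
      |iteratedDeriv k ψ s| ≤ C * Mk k * Real.exp ((k:ℝ) - (j+1)))
    : ∀ k ≤ j, ∀ s ∈ Set.Icc 0
        (min xb (x + (Real.exp 1 - 1)/(Real.exp 1)^2 * (Mk j / Mk (j+1)))),
      |iteratedDeriv k ψ s| ≤ C * Mk k * Real.exp ((k:ℝ) - j) := by
  have hE1 : (1:ℝ) < Real.exp 1 := by
    have := Real.exp_one_gt_d9; linarith
  have hdiff : ∀ k, Differentiable ℝ (iteratedDeriv k ψ) := by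
    intro k
    exact hψ.differentiable_iteratedDeriv k (by exact_mod_cast lt_top_iff_ne_top.mpr (by simp))
  have hcont : ∀ k, Continuous (iteratedDeriv k ψ) := fun k => (hdiff k).continuous
  set D : ℕ → ℝ → ℝ := fun k => iteratedDeriv k ψ with hDdef
  set B : ℕ → ℝ := fun k => C * Mk k * Real.exp ((k:ℝ) - j) with hB
  set c : ℝ := (Real.exp 1 - 1)/(Real.exp 1)^2 with hc
  have hcpos : 0 < c := by
    have h2 : (0:ℝ) < (Real.exp 1)^2 := by positivity
    rw [hc]
    apply div_pos (by linarith) h2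
  set S : Set ℝ := {y | y ∈ Set.Icc x xb ∧ ∀ k ≤ j, ∀ s ∈ Set.Icc 0 y, |D k s| ≤ B k} with hS
  have hxS : x ∈ S := by
    refine ⟨⟨le_rfl, hx.2⟩, ?_⟩
    intro k hk s hs
    refine le_trans (hQ k (le_trans hk (Nat.le_succ j)) s hs) ?_
    have hexp : Real.exp ((k:ℝ) - ((j:ℝ)+1)) ≤ Real.exp ((k:ℝ) - j) := by
      apply Real.exp_le_exp.2
      linarith
    have hCM : (0:ℝ) ≤ C * Mk k := mul_nonneg hC.le (hMpos k).le
    calc C * Mk k * Real.exp ((k:ℝ) - ((j:ℝ)+1)) ≤ C * Mk k * Real.exp ((k:ℝ) - j) :=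
          mul_le_mul_of_nonneg_left hexp hCM
      _ = B k := rfl
  have hSne : S.Nonempty := ⟨x, hxS⟩
  have hbdd : BddAbove S := ⟨xb, fun y hy => hy.1.2⟩
  set x' : ℝ := sSup S with hx'
  have hxx' : x ≤ x' := le_csSup hbdd hxS
  have hx'b : x' ≤ xb := csSup_le hSne (fun y hy => hy.1.2)
  -- the level-j bounds hold on all of [0, x']
  have hHsup : ∀ k ≤ j, ∀ s ∈ Set.Icc 0 x', |D k s| ≤ B k := by
    intro k hk s hs
    rcases le_or_gt s x with hsx | hsx
    · exact hxS.2 k hk s ⟨hs.1, hsx⟩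
    · rcases eq_or_lt_of_le hs.2 with heq | hlt
      · -- s = x'
        have h0x' : (0:ℝ) < x' := lt_of_le_of_lt hx.1 (by rw [← heq]; exact hsx)
        have hcl : IsClosed {u : ℝ | |D k u| ≤ B k} :=
          isClosed_le (continuous_abs.comp (hcont k)) continuous_const
        have hsub : Set.Ico 0 x' ⊆ {u : ℝ | |D k u| ≤ B k} := by
          intro u hu
          rcases le_or_gt u x with hux | hux
          · exact hxS.2 k hk u ⟨hu.1, hux⟩
          · obtain ⟨y, hyS, hyu⟩ := exists_lt_of_lt_csSup hSne hu.2
            exact hyS.2 k hk u ⟨hu.1, hyu.le⟩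
        have hsub2 : Set.Icc 0 x' ⊆ {u : ℝ | |D k u| ≤ B k} := by
          rw [← closure_Ico (ne_of_lt h0x')]
          exact closure_minimal hsub hcl
        exact hsub2 ⟨hs.1, hs.2⟩
      · obtain ⟨y, hyS, hys⟩ := exists_lt_of_lt_csSup hSne hlt
        exact hyS.2 k hk s ⟨hs.1, hys.le⟩
  -- key: min xb (x + c * a j) ≤ x'
  have hstep : min xb (x + c * (Mk j / Mk (j+1))) ≤ x' := by
    rcases lt_or_ge x' xb with hlt | hge
    · -- there is a binding index k
      have hex : ∃ k ≤ j, B k ≤ |D k x'| := by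
        by_contra hcon
        push_neg at hcon
        have hev1 : ∀ᶠ u in nhds x', ∀ k ∈ Finset.range (j+1), |D k u| < B k := by
          rw [Finset.eventually_all]
          intro k hkr
          have hklt := hcon k (Nat.lt_succ_iff.mp (Finset.mem_range.mp hkr))
          have hct : ContinuousAt (fun u => |D k u|) x' :=
            (continuous_abs.comp (hcont k)).continuousAt
          exact hct.eventually_lt_const hklt
        have hev2 : ∀ᶠ u in nhds x', u < xb := eventually_lt_nhds hlt
        obtain ⟨ε, hε, hball⟩ := Metric.eventually_nhds_iff.mp (hev1.and hev2)
        have hyball : ∀ u ∈ Set.Icc x' (x' + ε/2), dist u x' < ε := by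
          intro u hu
          rw [Real.dist_eq, abs_of_nonneg (by linarith [hu.1])]
          linarith [hu.2]
        have hyS : x' + ε/2 ∈ S := by
          refine ⟨⟨by linarith, ?_⟩, ?_⟩
          · have := (hball (hyball (x' + ε/2) ⟨by linarith, le_rfl⟩)).2
            linarith
          · intro k hk u hu
            rcases le_or_gt u x' with hux' | hux'
            · exact hHsup k hk u ⟨hu.1, hux'⟩
            · have hub : dist u x' < ε := hyball u ⟨hux'.le, hu.2⟩
              exact ((hball hub).1 k (Finset.mem_range.mpr (Nat.lt_succ_iff.mpr hk))).le
        have hcontra : x' + ε/2 ≤ x' := le_csSup hbdd hyS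
        linarith
      obtain ⟨k, hkj, hklb⟩ := hex
      -- mean value estimate on [x, x']
      have hIccsub : Set.Icc x x' ⊆ Set.Icc 0 x' := fun u hu => ⟨le_trans hx.1 hu.1, hu.2⟩
      have hKpos : (0:ℝ) < C * Mk (k+1) * Real.exp ((k:ℝ)+1-j) := by
        have := hMpos (k+1); positivity
      have hderivbound : ∀ u ∈ Set.Icc x x',
          ‖deriv (iteratedDeriv k ψ) u‖ ≤ C * Mk (k+1) * Real.exp ((k:ℝ)+1-j) := by
        intro u hu
        have hder : deriv (iteratedDeriv k ψ) u = iteratedDeriv (k+1) ψ u := by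
          rw [← iteratedDeriv_succ]
        rw [hder, Real.norm_eq_abs]
        rcases Nat.lt_or_ge k j with hkj' | hkj'
        · have h1 := hHsup (k+1) hkj' u (hIccsub hu)
          refine le_trans h1 ?_
          have : Real.exp (((k:ℕ)+1:ℕ) - (j:ℝ)) ≤ Real.exp ((k:ℝ)+1-j) := by
            apply Real.exp_le_exp.2
            push_cast
            linarith
          calc C * Mk (k+1) * Real.exp ((((k+1):ℕ):ℝ) - j) ≤
              C * Mk (k+1) * Real.exp ((k:ℝ)+1-j) := by
                apply mul_le_mul_of_nonneg_left _ (mul_nonneg hC.le (hMpos (k+1)).le)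
                apply Real.exp_le_exp.2
                push_cast
                linarith
            _ = _ := rfl
        · have hkeq : k = j := le_antisymm hkj hkj'
          have h1 := hb (k+1) u ⟨le_trans hx.1 hu.1, le_trans hu.2 hx'b⟩
          refine le_trans h1 ?_
          have hexp1 : (1:ℝ) ≤ Real.exp ((k:ℝ)+1-j) := by
            rw [hkeq]
            have : ((j:ℝ)+1-j) = 1 := by ring
            rw [this]
            linarith
          have := mul_nonneg hC.le (hMpos (k+1)).le
          nlinarith
      have hmvt := Convex.norm_image_sub_le_of_norm_deriv_le
        (fun u _ => (hdiff k).differentiableAt) hderivbound (convex_Icc x x')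
        (Set.left_mem_Icc.mpr hxx') (Set.right_mem_Icc.mpr hxx')
      rw [Real.norm_eq_abs, Real.norm_eq_abs, abs_of_nonneg (by linarith : (0:ℝ) ≤ x' - x)] at hmvt
      -- |D k x'| ≤ |D k x| + K (x' - x)
      have hDx : |D k x| ≤ C * Mk k * Real.exp ((k:ℝ) - ((j:ℝ)+1)) :=
        hQ k (le_trans hkj (Nat.le_succ j)) x ⟨hx.1, le_rfl⟩
      have hchain : C * Mk k * Real.exp ((k:ℝ) - j) ≤
          C * Mk k * Real.exp ((k:ℝ) - ((j:ℝ)+1)) +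
          C * Mk (k+1) * Real.exp ((k:ℝ)+1-j) * (x' - x) := by
        have h2 : |D k x'| ≤ |D k x| + C * Mk (k+1) * Real.exp ((k:ℝ)+1-j) * (x' - x) := by
          have h3 : |D k x'| - |D k x| ≤ |D k x' - D k x| := by
            exact abs_sub_abs_le_abs_sub _ _
          simp only [hDdef] at h3 ⊢
          linarith [hmvt, h3]
        refine le_trans hklb (le_trans h2 ?_)
        linarith [hDx]
      -- extract the lower bound on x' - x
      have hexpfact : Real.exp ((k:ℝ) - j) - Real.exp ((k:ℝ) - ((j:ℝ)+1)) =
          Real.exp ((k:ℝ)+1-j) * c := by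
        have h1 : Real.exp ((k:ℝ) - j) = Real.exp ((k:ℝ)+1-j) / Real.exp 1 := by
          rw [← Real.exp_sub]
          congr 1
          ring
        have h2 : Real.exp ((k:ℝ) - ((j:ℝ)+1)) =
            Real.exp ((k:ℝ)+1-j) / (Real.exp 1 * Real.exp 1) := by
          rw [← Real.exp_add, ← Real.exp_sub]
          congr 1
          ring
        have hEne : Real.exp 1 ≠ 0 := (Real.exp_pos 1).ne'
        rw [h1, h2, hc]
        field_simp
      have hgap : C * Mk k * (Real.exp ((k:ℝ)+1-j) * c) ≤
          C * Mk (k+1) * Real.exp ((k:ℝ)+1-j) * (x' - x) := by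
        have := hchain
        nlinarith [hexpfact, mul_nonneg hC.le (hMpos k).le]
      have hfinal : c * (Mk k / Mk (k+1)) ≤ x' - x := by
        have heq : c * (Mk k / Mk (k+1)) =
            (C * Mk k * (Real.exp ((k:ℝ)+1-j) * c)) /
              (C * Mk (k+1) * Real.exp ((k:ℝ)+1-j)) := by
          field_simp [(hMpos (k+1)).ne', hC.ne', (Real.exp_pos ((k:ℝ)+1-j)).ne']
        rw [heq, div_le_iff₀ hKpos]
        nlinarith [hgap]
      have haj : Mk j / Mk (j+1) ≤ Mk k / Mk (k+1) := ha k j hkj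
      have : x + c * (Mk j / Mk (j+1)) ≤ x' := by
        have := mul_le_mul_of_nonneg_left haj hcpos.le
        linarith [hfinal]
      exact le_trans (min_le_right _ _) this
    · exact le_trans (min_le_left _ _) hge
  intro k hk s hs
  exact hHsup k hk s ⟨hs.1, le_trans hs.2 hstep⟩

lemma denjoy_onesided (ψ : ℝ → ℝ) (hψ : ContDiff ℝ (⊤ : ℕ∞) ψ)
    (Mk : ℕ → ℝ) (hMpos : ∀ k, 0 < Mk k)
    (xb : ℝ) (hxb : 0 < xb)
    (C : ℝ) (hC : 0 < C)
    (hb : ∀ k : ℕ, ∀ y ∈ Set.Icc 0 xb, |iteratedDeriv k ψ y| ≤ C * Mk k)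
    (ha : ∀ i l : ℕ, i ≤ l → Mk l / Mk (l+1) ≤ Mk i / Mk (i+1))
    (hnots : ¬ Summable (fun k : ℕ => Mk k / Mk (k+1)))
    (hzero : ∀ k, iteratedDeriv k ψ 0 = 0) :
    ∀ t ∈ Set.Icc 0 xb, ψ t = 0 := by
  have hE1 : (1:ℝ) < Real.exp 1 := by
    have := Real.exp_one_gt_d9; linarith
  set c : ℝ := (Real.exp 1 - 1)/(Real.exp 1)^2 with hc
  have hcpos : 0 < c := by
    have h2 : (0:ℝ) < (Real.exp 1)^2 := by positivity
    rw [hc]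
    apply div_pos (by linarith) h2
  set a : ℕ → ℝ := fun i => Mk i / Mk (i+1) with hadef
  have hapos : ∀ i, 0 < a i := fun i => div_pos (hMpos i) (hMpos (i+1))
  -- the master claim, by induction on the number of steps
  have claim : ∀ N : ℕ, ∀ i ≤ N, ∀ k ≤ N - i,
      ∀ s ∈ Set.Icc 0 (min xb (c * ∑ l ∈ Finset.Ico (N-i) N, a l)),
      |iteratedDeriv k ψ s| ≤ C * Mk k * Real.exp ((k:ℝ) - (N - i : ℕ)) := by
    intro N i
    induction i with
    | zero =>
      intro _ k hk s hs
      have hico : Finset.Ico (N - 0) N = ∅ := by simp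
      rw [hico] at hs
      simp only [Finset.sum_empty, mul_zero] at hs
      have hmin : min xb 0 = 0 := min_eq_right hxb.le
      rw [hmin] at hs
      have hs0 : s = 0 := le_antisymm hs.2 hs.1
      rw [hs0, hzero k, abs_zero]
      have := hMpos k
      positivity
    | succ i ih =>
      intro hin k hk s hs
      have hiN : i ≤ N := le_trans (Nat.le_succ i) hin
      set j : ℕ := N - (i+1) with hj
      have hji : N - i = j + 1 := by omega
      have hQ := ih hiN
      rw [hji] at hQ
      -- apply the step lemma at level j with x = min xb (c * Σ_{Ico (j+1) N} a)
      set x : ℝ := min xb (c * ∑ l ∈ Finset.Ico (j+1) N, a l) with hxdef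
      have hsum_nonneg : 0 ≤ c * ∑ l ∈ Finset.Ico (j+1) N, a l :=
        mul_nonneg hcpos.le (Finset.sum_nonneg fun l _ => (hapos l).le)
      have hxmem : x ∈ Set.Icc 0 xb :=
        ⟨le_min hxb.le hsum_nonneg, min_le_left _ _⟩
      have hQ' : ∀ k' ≤ j + 1, ∀ s' ∈ Set.Icc 0 x,
          |iteratedDeriv k' ψ s'| ≤ C * Mk k' * Real.exp ((k':ℝ) - ((j:ℝ)+1)) := by
        intro k' hk' s' hs'
        have := hQ k' hk' s' hs'
        convert this using 3
        push_cast
        ring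
      have hstep := denjoy_step ψ hψ Mk hMpos xb hxb C hC hb ha j x hxmem hQ'
      -- identify the endpoints
      have hNj : j < N := by omega
      have hsplit : ∑ l ∈ Finset.Ico j N, a l = a j + ∑ l ∈ Finset.Ico (j+1) N, a l :=
        Finset.sum_eq_sum_Ico_succ_bot hNj a
      have hmono : min xb (c * ∑ l ∈ Finset.Ico j N, a l) ≤ min xb (x + c * a j) := by
        rcases le_total xb (c * ∑ l ∈ Finset.Ico (j+1) N, a l) with hcase | hcase
        · have hx1 : x = xb := min_eq_left hcase
          apply le_min (min_le_left _ _)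
          rw [hx1]
          calc min xb (c * ∑ l ∈ Finset.Ico j N, a l) ≤ xb := min_le_left _ _
            _ ≤ xb + c * a j := le_add_of_nonneg_right (mul_nonneg hcpos.le (hapos j).le)
        · have hx1 : x = c * ∑ l ∈ Finset.Ico (j+1) N, a l := min_eq_right hcase
          apply le_min (min_le_left _ _)
          calc min xb (c * ∑ l ∈ Finset.Ico j N, a l) ≤ c * ∑ l ∈ Finset.Ico j N, a l :=
                min_le_right _ _
            _ = x + c * a j := by rw [hx1, hsplit]; ring
      refine hstep k hk s ⟨hs.1, le_trans hs.2 (le_trans hmono ?_)⟩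
      exact le_rfl

  -- conclusion
  intro t ht
  have habs : ∀ j₀ : ℕ, |ψ t| ≤ C * Mk 0 * Real.exp (0 - (j₀:ℝ)) := by
    intro j₀
    have htend := (not_summable_iff_tendsto_nat_atTop_of_nonneg
      (fun n => (hapos n).le)).mp hnots
    have hev := (htend.eventually_ge_atTop
      (xb/c + ∑ l ∈ Finset.range j₀, a l)).and (Filter.eventually_ge_atTop j₀)
    obtain ⟨N, hN1, hN2⟩ := hev.exists
    have hsplit := Finset.sum_range_add_sum_Ico a hN2
    have hsumIco : xb / c ≤ ∑ l ∈ Finset.Ico j₀ N, a l := by linarith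
    have hxbc : xb ≤ c * ∑ l ∈ Finset.Ico j₀ N, a l := by
      calc xb = c * (xb / c) := by field_simp
        _ ≤ c * ∑ l ∈ Finset.Ico j₀ N, a l := by
            exact mul_le_mul_of_nonneg_left hsumIco hcpos.le
    have hNjj : N - (N - j₀) = j₀ := by omega
    have hclaim := claim N (N - j₀) (Nat.sub_le N j₀) 0 (Nat.zero_le _) t
    rw [hNjj] at hclaim
    have hmin : min xb (c * ∑ l ∈ Finset.Ico j₀ N, a l) = xb := min_eq_left hxbc
    rw [hmin] at hclaim
    have := hclaim ht
    rw [iteratedDeriv_zero] at this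
    refine le_trans this (le_of_eq ?_)
    norm_num
  have h0 : Filter.Tendsto (fun j₀ : ℕ => C * Mk 0 * Real.exp (0 - (j₀:ℝ)))
      Filter.atTop (nhds 0) := by
    have h1 : Filter.Tendsto (fun j₀ : ℕ => (0:ℝ) - (j₀:ℝ)) Filter.atTop Filter.atBot := by
      simp only [zero_sub]
      exact Filter.tendsto_neg_atTop_atBot.comp tendsto_natCast_atTop_atTop
    have h2 := Real.tendsto_exp_atBot.comp h1
    have h3 := h2.const_mul (C * Mk 0)
    simpa using h3
  have hle := ge_of_tendsto' h0 habs
  have := abs_nonneg (ψ t)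
  have : |ψ t| = 0 := le_antisymm hle this
  exact abs_eq_zero.mp this

/-- Denjoy–Carleman quasianalyticity: if `φ ∈ C^∞(ℝ)` satisfies
`sup_{|y| ≤ x} |φ^{(k)}(y)| ≤ C M_k(x)` where, for each `x ≥ 0`, the positive,
logarithmically convex sequence `(M_k(x))_k` satisfies `Σ_k M_k(x)^{-1/k} = ∞`, and
`φ` vanishes to infinite order at `0`, then `φ ≡ 0`. -/
theorem denjoy_carleman_quasianalytic (M : ℕ → ℝ → ℝ)
    (hpos : ∀ x ≥ (0 : ℝ), ∀ k : ℕ, 0 < M k x)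
    (hlogconv : ∀ x ≥ (0 : ℝ), ∀ k : ℕ, M (k + 1) x ^ 2 ≤ M k x * M (k + 2) x)
    (hdiv : ∀ x > (0 : ℝ),
      ¬ Summable (fun k : ℕ => (M (k + 1) x) ^ (-(1 : ℝ) / (k + 1))))
    (φ : ℝ → ℝ) (hφ : ContDiff ℝ (⊤ : ℕ∞) φ)
    (C : ℝ)
    (hbound : ∀ x ≥ (0 : ℝ), ∀ k : ℕ, ∀ y : ℝ, |y| ≤ x →
      |iteratedDeriv k φ y| ≤ C * M k x)
    (hzero : ∀ k : ℕ, iteratedDeriv k φ 0 = 0) :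
    φ = 0 := by
  have hC0 : 0 ≤ C := by
    have h1 := hbound 0 le_rfl 0 0 (by norm_num)
    rw [hzero 0, abs_zero] at h1
    nlinarith [hpos 0 le_rfl 0]
  set C' : ℝ := C + 1 with hC'def
  have hC' : 0 < C' := by rw [hC'def]; linarith
  have hbound' : ∀ x ≥ (0:ℝ), ∀ k : ℕ, ∀ y : ℝ, |y| ≤ x →
      |iteratedDeriv k φ y| ≤ C' * M k x := by
    intro x hx k y hy
    refine le_trans (hbound x hx k y hy) ?_
    have := hpos x hx k
    rw [hC'def]
    nlinarith
  have hanti : ∀ x ≥ (0:ℝ), ∀ i l : ℕ, i ≤ l →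
      M l x / M (l+1) x ≤ M i x / M (i+1) x := by
    intro x hx
    have hsucc : ∀ l : ℕ, M (l+1) x / M ((l+1)+1) x ≤ M l x / M (l+1) x := by
      intro l
      have hlc := hlogconv x hx l
      rw [div_le_div_iff₀ (hpos x hx (l+2)) (hpos x hx (l+1))]
      nlinarith [hpos x hx l, hpos x hx (l+1), hpos x hx (l+2)]
    exact fun i l hil => (antitone_nat_of_succ_le (f := fun n => M n x / M (n+1) x) hsucc) hil
  funext t
  simp only [Pi.zero_apply]
  rcases le_or_gt 0 t with htpos | htneg
  · set xb : ℝ := t + 1 with hxb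
    have hxbpos : 0 < xb := by rw [hxb]; linarith
    have hres := denjoy_onesided φ hφ (fun k => M k xb) (hpos xb hxbpos.le) xb hxbpos C' hC'
      (fun k y hy => hbound' xb hxbpos.le k y (abs_le.mpr ⟨by linarith [hy.1], hy.2⟩))
      (hanti xb hxbpos.le)
      (ratio_not_summable (fun k => M k xb) (hpos xb hxbpos.le) (hdiv xb hxbpos))
      hzero
    exact hres t ⟨htpos, by rw [hxb]; linarith⟩
  · set ψ : ℝ → ℝ := fun y => φ (-y) with hψdef
    have hψ : ContDiff ℝ (⊤ : ℕ∞) ψ := hφ.comp contDiff_neg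
    have habsψ : ∀ (k : ℕ) (y : ℝ), |iteratedDeriv k ψ y| = |iteratedDeriv k φ (-y)| := by
      intro k y
      rw [hψdef]
      rw [iteratedDeriv_comp_neg k φ y]
      rw [smul_eq_mul, abs_mul, abs_pow, abs_neg, abs_one, one_pow, one_mul]
    have hzeroψ : ∀ k, iteratedDeriv k ψ 0 = 0 := by
      intro k
      rw [hψdef, iteratedDeriv_comp_neg k φ 0, neg_zero, hzero k, smul_zero]
    set xb : ℝ := -t + 1 with hxb
    have hxbpos : 0 < xb := by rw [hxb]; linarith
    have hres := denjoy_onesided ψ hψ (fun k => M k xb) (hpos xb hxbpos.le) xb hxbpos C' hC'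
      (fun k y hy => by
        rw [habsψ k y]
        exact hbound' xb hxbpos.le k (-y) (by rw [abs_neg]; exact abs_le.mpr ⟨by linarith [hy.1], hy.2⟩))
      (hanti xb hxbpos.le)
      (ratio_not_summable (fun k => M k xb) (hpos xb hxbpos.le) (hdiv xb hxbpos))
      hzeroψ
    have h2 := hres (-t) ⟨by linarith, by rw [hxb]; linarith⟩
    rw [hψdef] at h2
    simpa using h2
end
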